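/- arXiv:2106.01260 — 4 statements merged into one kernel-verified Lean document; each statement's English description precedes it below -/
import Mathlib

section
/- In the translation-invariant setting, for any a, b ∈ ℳ and any path γ in ℳ with end-points a, b one has l(γ) ≥ ⟨φ⁻¹(b) − φ⁻¹(a), M (φ⁻¹(b) − φ⁻¹(a))⟩^{1/2}, i.e. l(γ) ≥ ‖Gᵀ(φ⁻¹(b) − φ⁻¹(a))‖ where G satisfies G Gᵀ = M. -/
open Set
open scoped ENNReal BigOperators

noncomputable section

/-- The real Hilbert space ℓ² of square-summable real sequences. -/
abbrev l2 : Type := lp (fun _ : ℕ => ℝ) 2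

/-- A partition `0 = t₀ ≤ t₁ ≤ … ≤ t_n = 1` of `[0,1]`. -/
structure PathPartition where
  n : ℕ
  t : ℕ → ℝ
  first : t 0 = 0
  last : t n = 1
  mono : ∀ k, k < n → t k ≤ t (k + 1)

/-- The set of points of a partition. -/
def PathPartition.points (P : PathPartition) : Set ℝ := {x | ∃ k ≤ P.n, P.t k = x}

/-- `χ(γ, 𝒫) = ∑ₖ ‖γ_{t_k} − γ_{t_{k−1}}‖`. -/
def chiSum {E : Type*} [NormedAddCommGroup E] (γ : ℝ → E) (P : PathPartition) : ℝ :=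
  ∑ k ∈ Finset.range P.n, ‖γ (P.t (k + 1)) - γ (P.t k)‖

/-- The length of a path: the supremum over all partitions of `χ(γ, 𝒫)`. -/
def pathLength {E : Type*} [NormedAddCommGroup E] (γ : ℝ → E) : ℝ≥0∞ :=
  ⨆ P : PathPartition, ENNReal.ofReal (chiSum γ P)

/-- A path in `S` with end-points `a, b`: a continuous map `γ : [0,1] → S`
with `γ 0 = a` and `γ 1 = b`. -/
def IsPathIn {E : Type*} [NormedAddCommGroup E] (S : Set E) (a b : E) (γ : ℝ → E) : Prop :=
  ContinuousOn γ (Icc 0 1) ∧ (∀ t ∈ Icc (0:ℝ) 1, γ t ∈ S) ∧ γ 0 = a ∧ γ 1 = b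

/-- Geodesic distance in `S`: the infimum of path-lengths over paths in `S` joining `a, b`. -/
def geodesicDist {E : Type*} [NormedAddCommGroup E] (S : Set E) (a b : E) : ℝ≥0∞ :=
  ⨅ γ : {γ : ℝ → E // IsPathIn S a b γ}, pathLength γ.val

/-- The quadratic form `⟨v, H v⟩ = ∑ᵢⱼ vᵢ Hᵢⱼ vⱼ`. -/
def quadForm {d : ℕ} (H : Matrix (Fin d) (Fin d) ℝ) (v : EuclideanSpace ℝ (Fin d)) : ℝ :=
  ∑ i, ∑ j, v i * H i j * v j

/-- The matrix `M = −Hess g(0)`, with entries `M_{ij} = −∂²g/∂u^{(i)}∂u^{(j)}` at the origin. -/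
def negHess {d : ℕ} (g : EuclideanSpace ℝ (Fin d) → ℝ) : Matrix (Fin d) (Fin d) ℝ :=
  fun i j => -(deriv (fun s : ℝ => deriv (fun r : ℝ =>
    g (r • EuclideanSpace.single i (1:ℝ) + s • EuclideanSpace.single j (1:ℝ))) 0) 0)


section AuxLemmas
variable {d : ℕ} (M : Matrix (Fin d) (Fin d) ℝ)


lemma quadForm_zero : quadForm M 0 = 0 := by simp [quadForm]

lemma quadForm_smul (t : ℝ) (v : EuclideanSpace ℝ (Fin d)) :
    quadForm M (t • v) = t ^ 2 * quadForm M v := by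
  simp only [quadForm, PiLp.smul_apply, smul_eq_mul, Finset.mul_sum]
  refine Finset.sum_congr rfl fun i _ => Finset.sum_congr rfl fun j _ => by ring

lemma quadForm_continuous : Continuous fun v : EuclideanSpace ℝ (Fin d) => quadForm M v := by
  unfold quadForm
  fun_prop

def bForm (u v : EuclideanSpace ℝ (Fin d)) : ℝ := ∑ i, ∑ j, u i * M i j * v j

lemma bForm_symm (hsym : ∀ i j, M i j = M j i) (u v : EuclideanSpace ℝ (Fin d)) :
    bForm M v u = bForm M u v := by
  unfold bForm
  rw [Finset.sum_comm]
  refine Finset.sum_congr rfl fun i _ => Finset.sum_congr rfl fun j _ => by rw [hsym j i]; ring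

lemma quadForm_expand (hsym : ∀ i j, M i j = M j i) (s t : ℝ) (u v : EuclideanSpace ℝ (Fin d)) :
    quadForm M (s • u + t • v)
      = s ^ 2 * quadForm M u + 2 * s * t * bForm M u v + t ^ 2 * quadForm M v := by
  have h : ∀ i j, (s • u + t • v) i * M i j * (s • u + t • v) j
      = s ^ 2 * (u i * M i j * u j) + (s * t) * (u i * M i j * v j)
        + (s * t) * (v i * M i j * u j) + t ^ 2 * (v i * M i j * v j) := by
    intro i j
    simp only [PiLp.add_apply, PiLp.smul_apply, smul_eq_mul]
    ring
  simp only [quadForm]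
  rw [show (∑ i, ∑ j, (s • u + t • v) i * M i j * (s • u + t • v) j)
      = ∑ i, ∑ j, (s ^ 2 * (u i * M i j * u j) + (s * t) * (u i * M i j * v j)
        + (s * t) * (v i * M i j * u j) + t ^ 2 * (v i * M i j * v j)) from
    Finset.sum_congr rfl fun i _ => Finset.sum_congr rfl fun j _ => h i j]
  simp only [Finset.sum_add_distrib, ← Finset.mul_sum]
  have := bForm_symm M hsym u v
  unfold bForm at this
  rw [this]
  unfold bForm
  ring


lemma quadForm_eq_dot (v : EuclideanSpace ℝ (Fin d)) :
    quadForm M v = dotProduct (v : Fin d → ℝ) (M.mulVec (v : Fin d → ℝ)) := by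
  simp only [quadForm, dotProduct, Matrix.mulVec, Finset.mul_sum]
  exact Finset.sum_congr rfl fun i _ => Finset.sum_congr rfl fun j _ => by ring

lemma quadForm_pos (hM : M.PosDef) {v : EuclideanSpace ℝ (Fin d)} (hv : v ≠ 0) :
    0 < quadForm M v := by
  have h := hM.dotProduct_mulVec_pos (x := (v : Fin d → ℝ)) (fun h0 => hv (by ext i; simpa using congrFun h0 i))
  rw [quadForm_eq_dot]
  simpa using h

lemma msymm (hM : M.PosDef) (i j : Fin d) : M i j = M j i := by
  have h := congrFun (congrFun hM.1 i) j
  simpa [Matrix.conjTranspose_apply] using h.symm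


lemma quadForm_nonneg (hM : M.PosDef) (v : EuclideanSpace ℝ (Fin d)) : 0 ≤ quadForm M v := by
  rcases eq_or_ne v 0 with rfl | hv
  · simp [quadForm_zero]
  · exact (quadForm_pos M hM hv).le

/-- Cauchy–Schwarz: (bForm u v)^2 ≤ quadForm u * quadForm v. -/
lemma bForm_sq_le (hM : M.PosDef) (u v : EuclideanSpace ℝ (Fin d)) :
    (bForm M u v) ^ 2 ≤ quadForm M u * quadForm M v := by
  rcases eq_or_ne v 0 with rfl | hv
  · simp [bForm, quadForm_zero]
  · have hQv : 0 < quadForm M v := quadForm_pos M hM hv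
    have h := quadForm_nonneg M hM ((quadForm M v) • u + (-(bForm M u v)) • v)
    rw [quadForm_expand M (msymm M hM) _ _ u v] at h
    nlinarith [h, hQv]

def nM (M : Matrix (Fin d) (Fin d) ℝ) (v : EuclideanSpace ℝ (Fin d)) : ℝ :=
  Real.sqrt (quadForm M v)

lemma nM_nonneg (v : EuclideanSpace ℝ (Fin d)) : 0 ≤ nM M v := Real.sqrt_nonneg _

lemma nM_add_le (hM : M.PosDef) (u v : EuclideanSpace ℝ (Fin d)) :
    nM M (u + v) ≤ nM M u + nM M v := by
  have hexp : quadForm M (u + v)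
      = quadForm M u + 2 * bForm M u v + quadForm M v := by
    have := quadForm_expand M (msymm M hM) 1 1 u v
    simpa using this
  have hcs : bForm M u v ≤ nM M u * nM M v := by
    have h1 : bForm M u v ≤ |bForm M u v| := le_abs_self _
    have h2 : |bForm M u v| = Real.sqrt ((bForm M u v) ^ 2) := (Real.sqrt_sq_eq_abs _).symm
    have h3 : Real.sqrt ((bForm M u v) ^ 2) ≤ Real.sqrt (quadForm M u * quadForm M v) :=
      Real.sqrt_le_sqrt (bForm_sq_le M hM u v)
    rw [Real.sqrt_mul (quadForm_nonneg M hM u)] at h3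
    calc bForm M u v ≤ _ := h1
      _ = _ := h2
      _ ≤ _ := h3
  have hsq : quadForm M (u + v) ≤ (nM M u + nM M v) ^ 2 := by
    have e1 : nM M u ^ 2 = quadForm M u := Real.sq_sqrt (quadForm_nonneg M hM u)
    have e2 : nM M v ^ 2 = quadForm M v := Real.sq_sqrt (quadForm_nonneg M hM v)
    rw [hexp]
    nlinarith [hcs, e1, e2]
  calc nM M (u + v) = Real.sqrt (quadForm M (u + v)) := rfl
    _ ≤ Real.sqrt ((nM M u + nM M v) ^ 2) := Real.sqrt_le_sqrt hsq
    _ = |nM M u + nM M v| := Real.sqrt_sq_eq_abs _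
    _ = nM M u + nM M v := abs_of_nonneg (add_nonneg (Real.sqrt_nonneg _) (Real.sqrt_nonneg _))

lemma nM_telescope (hM : M.PosDef) (y : ℕ → EuclideanSpace ℝ (Fin d)) (n : ℕ) :
    nM M (y n - y 0) ≤ ∑ k ∈ Finset.range n, nM M (y (k + 1) - y k) := by
  induction n with
  | zero => simp [nM, quadForm_zero]
  | succ n ih =>
    have : y (n + 1) - y 0 = (y (n + 1) - y n) + (y n - y 0) := by abel
    rw [this, Finset.sum_range_succ]
    calc nM M ((y (n + 1) - y n) + (y n - y 0))
        ≤ nM M (y (n + 1) - y n) + nM M (y n - y 0) := nM_add_le M hM _ _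
      _ ≤ nM M (y (n + 1) - y n) + ∑ k ∈ Finset.range n, nM M (y (k + 1) - y k) := by linarith
      _ = _ := by ring

/-- A uniform lower bound `c‖v‖² ≤ Q(v)` coming from compactness of the sphere. -/
lemma exists_coercivity (hd : 1 ≤ d) (hM : M.PosDef) :
    ∃ c > 0, ∀ v : EuclideanSpace ℝ (Fin d), c * ‖v‖ ^ 2 ≤ quadForm M v := by
  haveI : Nonempty (Fin d) := ⟨⟨0, hd⟩⟩
  haveI : Nontrivial (EuclideanSpace ℝ (Fin d)) := by
    refine ⟨0, EuclideanSpace.single ⟨0, hd⟩ (1:ℝ), ?_⟩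
    intro h
    have := congrArg (fun w : EuclideanSpace ℝ (Fin d) => w ⟨0, hd⟩) h
    simp [EuclideanSpace.single_apply] at this
  have hsph : IsCompact (Metric.sphere (0 : EuclideanSpace ℝ (Fin d)) 1) :=
    isCompact_sphere 0 1
  have hne : (Metric.sphere (0 : EuclideanSpace ℝ (Fin d)) 1).Nonempty :=
    NormedSpace.sphere_nonempty.mpr zero_le_one
  obtain ⟨w0, hw0, hmin⟩ := hsph.exists_isMinOn hne ((quadForm_continuous M).continuousOn)
  have hw0n : ‖w0‖ = 1 := by simpa using hw0
  have hw0ne : w0 ≠ 0 := by intro h; rw [h] at hw0n; simp at hw0n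
  refine ⟨quadForm M w0, quadForm_pos M hM hw0ne, fun v => ?_⟩
  rcases eq_or_ne v 0 with rfl | hv
  · simp [quadForm_zero]
  · have hnv : 0 < ‖v‖ := norm_pos_iff.mpr hv
    set w : EuclideanSpace ℝ (Fin d) := ‖v‖⁻¹ • v with hw
    have hwn : ‖w‖ = 1 := by
      rw [hw, norm_smul]
      simp [abs_of_nonneg (inv_nonneg.mpr hnv.le), inv_mul_cancel₀ hnv.ne']
    have hmem : w ∈ Metric.sphere (0 : EuclideanSpace ℝ (Fin d)) 1 := by simpa using hwn
    have h1 : quadForm M w0 ≤ quadForm M w := hmin hmem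
    have h2 : quadForm M w = ‖v‖⁻¹ ^ 2 * quadForm M v := by
      rw [hw, quadForm_smul]
    rw [h2] at h1
    have := mul_le_mul_of_nonneg_left h1 (sq_nonneg ‖v‖)
    calc quadForm M w0 * ‖v‖ ^ 2 = ‖v‖ ^ 2 * quadForm M w0 := by ring
      _ ≤ ‖v‖ ^ 2 * (‖v‖⁻¹ ^ 2 * quadForm M v) := this
      _ = quadForm M v := by
          field_simp

end AuxLemmas

section AuxTaylor
variable {d : ℕ} (g : EuclideanSpace ℝ (Fin d) → ℝ)


lemma negHess_entry (hg : ContDiff ℝ 2 g) (i j : Fin d) :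
    negHess g i j = -((fderiv ℝ (fderiv ℝ g) 0) (EuclideanSpace.single j (1:ℝ))
      (EuclideanSpace.single i (1:ℝ))) := by
  set e : Fin d → EuclideanSpace ℝ (Fin d) := fun k => EuclideanSpace.single k (1:ℝ) with he
  have hgdiff : Differentiable ℝ g := hg.differentiable two_ne_zero
  have hf'diff : Differentiable ℝ (fderiv ℝ g) :=
    (hg.fderiv_right (m := 1) le_rfl).differentiable one_ne_zero
  have h1 : ∀ s : ℝ, deriv (fun r : ℝ => g (r • e i + s • e j)) 0
      = fderiv ℝ g (s • e j) (e i) := by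
    intro s
    have hline : HasDerivAt (fun r : ℝ => r • e i + s • e j) (e i) 0 := by
      simpa using ((hasDerivAt_id (0:ℝ)).smul_const (e i)).add_const (s • e j)
    have hgat : HasFDerivAt g (fderiv ℝ g ((0:ℝ) • e i + s • e j)) ((0:ℝ) • e i + s • e j) :=
      (hgdiff _).hasFDerivAt
    have := hgat.comp_hasDerivAt 0 hline
    simp only [zero_smul, zero_add] at this
    exact this.deriv
  have hfun : (fun s : ℝ => deriv (fun r : ℝ => g (r • e i + s • e j)) 0)
      = fun s : ℝ => fderiv ℝ g (s • e j) (e i) := funext h1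
  have hline2 : HasDerivAt (fun s : ℝ => s • e j) (e j) 0 := by
    simpa using (hasDerivAt_id (0:ℝ)).smul_const (e j)
  have hD2at : HasFDerivAt (fderiv ℝ g) (fderiv ℝ (fderiv ℝ g) 0) ((0:ℝ) • e j) := by
    simpa using (hf'diff 0).hasFDerivAt
  have hc : HasDerivAt (fun s : ℝ => fderiv ℝ g (s • e j)) (fderiv ℝ (fderiv ℝ g) 0 (e j)) 0 :=
    hD2at.comp_hasDerivAt 0 hline2
  have happ : HasDerivAt (fun s : ℝ => fderiv ℝ g (s • e j) (e i))
      (fderiv ℝ (fderiv ℝ g) 0 (e j) (e i)) 0 := by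
    simpa using hc.clm_apply (hasDerivAt_const 0 (e i))
  rw [show negHess g i j = -(deriv (fun s : ℝ => deriv (fun r : ℝ =>
      g (r • e i + s • e j)) 0) 0) from rfl, hfun, happ.deriv]

lemma euclid_basis_sum (v : EuclideanSpace ℝ (Fin d)) :
    v = ∑ k, v k • EuclideanSpace.single k (1:ℝ) := by
  ext i
  rw [show (∑ k, v k • EuclideanSpace.single k (1:ℝ)) i
      = ∑ k, (v k • EuclideanSpace.single k (1:ℝ)) i from by
    rw [WithLp.ofLp_sum]; exact Finset.sum_apply i Finset.univ _]
  simp [EuclideanSpace.single_apply]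

lemma quadForm_negHess (hg : ContDiff ℝ 2 g) (v : EuclideanSpace ℝ (Fin d)) :
    quadForm (negHess g) v = -(fderiv ℝ (fderiv ℝ g) 0 v v) := by
  set D2 := fderiv ℝ (fderiv ℝ g) 0 with hD2
  set e : Fin d → EuclideanSpace ℝ (Fin d) := fun k => EuclideanSpace.single k (1:ℝ) with he
  have hA : ∀ w, D2 v w = ∑ j, v j * D2 (e j) w := by
    intro w
    conv_lhs => rw [euclid_basis_sum v]
    rw [map_sum, ContinuousLinearMap.sum_apply]
    refine Finset.sum_congr rfl fun j _ => ?_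
    rw [map_smul]
    simp [smul_eq_mul, he]
  have hB : ∀ j, D2 (e j) v = ∑ i, v i * D2 (e j) (e i) := by
    intro j
    conv_lhs => rw [euclid_basis_sum v]
    rw [map_sum]
    refine Finset.sum_congr rfl fun i _ => ?_
    rw [map_smul]
    simp [smul_eq_mul, he]
  have hexp : D2 v v = ∑ j, ∑ i, v j * v i * D2 (e j) (e i) := by
    rw [hA v]
    refine Finset.sum_congr rfl fun j _ => ?_
    rw [hB j, Finset.mul_sum]
    exact Finset.sum_congr rfl fun i _ => by ring
  have : quadForm (negHess g) v = ∑ i, ∑ j, v i * (-(D2 (e j) (e i))) * v j := by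
    simp only [quadForm]
    exact Finset.sum_congr rfl fun i _ => Finset.sum_congr rfl fun j _ => by
      rw [negHess_entry g hg i j]
  rw [this, hexp, Finset.sum_comm, neg_eq_iff_eq_neg.symm]
  rw [← Finset.sum_neg_distrib]
  refine Finset.sum_congr rfl fun j _ => ?_
  rw [← Finset.sum_neg_distrib]
  refine Finset.sum_congr rfl fun i _ => by ring

set_option maxHeartbeats 1000000 in
lemma taylor_bound (hg : ContDiff ℝ 2 g) :
    ∀ ε > 0, ∃ δ > 0, ∀ u : EuclideanSpace ℝ (Fin d), ‖u‖ ≤ δ →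
      |2 * g 0 - g u - g (-u) - quadForm (negHess g) u| ≤ ε * ‖u‖ ^ 2 := by
  intro ε hε
  have hgdiff : Differentiable ℝ g := hg.differentiable two_ne_zero
  have hf'diff : Differentiable ℝ (fderiv ℝ g) :=
    (hg.fderiv_right (m := 1) le_rfl).differentiable one_ne_zero
  set f' := fderiv ℝ g with hf'
  set D2 := fderiv ℝ f' 0 with hD2def
  have hD2 : HasFDerivAt f' D2 0 := (hf'diff 0).hasFDerivAt
  have hlo := hasFDerivAt_iff_isLittleO_nhds_zero.mp hD2
  rw [Asymptotics.isLittleO_iff] at hlo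
  have hev := hlo (show (0:ℝ) < ε/2 by linarith)
  rw [Metric.eventually_nhds_iff] at hev
  obtain ⟨δ', hδ', hball⟩ := hev
  refine ⟨δ'/2, by linarith, fun u hu => ?_⟩
  have hrem : ∀ w : EuclideanSpace ℝ (Fin d), ‖w‖ ≤ δ'/2 →
      ‖f' w - f' 0 - D2 w‖ ≤ ε/2 * ‖w‖ := by
    intro w hw
    have := hball (y := w) (by simpa [dist_zero_right] using lt_of_le_of_lt hw (by linarith))
    simpa [zero_add] using this
  set C := D2 u u with hC
  set ψ : ℝ → ℝ := fun t => g (t • u) + g (-(t • u)) - t^2 * C with hψdef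
  have hψ : ∀ t : ℝ, HasDerivAt ψ (f' (t • u) u - f' (-(t • u)) u - 2*t*C) t := by
    intro t
    have hl1 : HasDerivAt (fun t : ℝ => t • u) u t := by
      simpa using (hasDerivAt_id t).smul_const u
    have h1 : HasDerivAt (fun t : ℝ => g (t • u)) (f' (t • u) u) t :=
      (hgdiff _).hasFDerivAt.comp_hasDerivAt t hl1
    have hl2 : HasDerivAt (fun t : ℝ => -(t • u)) (-u) t := hl1.neg
    have h2 : HasDerivAt (fun t : ℝ => g (-(t • u))) (f' (-(t • u)) (-u)) t :=
      (hgdiff _).hasFDerivAt.comp_hasDerivAt t hl2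
    have h3 : HasDerivAt (fun t : ℝ => t^2 * C) (2*t*C) t := by
      simpa using (hasDerivAt_pow 2 t).mul_const C
    have h4 := (h1.add h2).sub h3
    refine h4.congr_deriv ?_
    rw [map_neg]
    ring
  obtain ⟨c, hc, hslope⟩ := exists_hasDerivAt_eq_slope ψ
    (fun t => f' (t • u) u - f' (-(t • u)) u - 2*t*C) one_pos
    (fun t _ => (hψ t).continuousAt.continuousWithinAt)
    (fun t _ => hψ t)
  have hψ1 : ψ 1 = g u + g (-u) - C := by simp [hψdef]
  have hψ0 : ψ 0 = 2 * g 0 := by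
    simp [hψdef]
    ring
  rw [hψ1, hψ0] at hslope
  -- bound the derivative at c
  set A := f' (c • u) - f' 0 - D2 (c • u) with hA
  set B := f' (-(c • u)) - f' 0 - D2 (-(c • u)) with hB
  have hkey : f' (c • u) u - f' (-(c • u)) u - 2*c*C = A u - B u := by
    have e1 : D2 (c • u) u = c * C := by
      rw [map_smul]
      simp [hC, smul_eq_mul]
    have e2 : D2 (-(c • u)) u = -(c * C) := by
      rw [map_neg, ContinuousLinearMap.neg_apply, e1]
    simp only [hA, hB, ContinuousLinearMap.sub_apply]
    rw [e1, e2]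
    ring
  have hcu : ‖c • u‖ ≤ δ'/2 := by
    rw [norm_smul]
    have : |c| ≤ 1 := by
      rw [abs_of_pos hc.1]
      exact hc.2.le
    calc |c| * ‖u‖ ≤ 1 * ‖u‖ := mul_le_mul_of_nonneg_right this (norm_nonneg u)
      _ = ‖u‖ := one_mul _
      _ ≤ δ'/2 := hu
  have hAn : ‖A‖ ≤ ε/2 * ‖u‖ := by
    have := hrem (c • u) hcu
    refine le_trans this ?_
    rw [norm_smul, Real.norm_eq_abs]
    have h1 : |c| * ‖u‖ ≤ ‖u‖ := by
      rw [abs_of_pos hc.1]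
      exact mul_le_of_le_one_left (norm_nonneg u) hc.2.le
    have h2 := mul_le_mul_of_nonneg_left h1 (by linarith : (0:ℝ) ≤ ε/2)
    linarith
  have hBn : ‖B‖ ≤ ε/2 * ‖u‖ := by
    have hncu : ‖-(c • u)‖ ≤ δ'/2 := by rwa [norm_neg]
    have := hrem (-(c • u)) hncu
    refine le_trans this ?_
    rw [norm_neg, norm_smul, Real.norm_eq_abs]
    have h1 : |c| * ‖u‖ ≤ ‖u‖ := by
      rw [abs_of_pos hc.1]
      exact mul_le_of_le_one_left (norm_nonneg u) hc.2.le
    have h2 := mul_le_mul_of_nonneg_left h1 (by linarith : (0:ℝ) ≤ ε/2)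
    linarith
  have hder : |f' (c • u) u - f' (-(c • u)) u - 2*c*C| ≤ ε * ‖u‖ ^ 2 := by
    rw [hkey]
    have h1 : |A u| ≤ ε/2 * ‖u‖ * ‖u‖ := by
      have := A.le_opNorm u
      rw [Real.norm_eq_abs] at this
      calc |A u| ≤ ‖A‖ * ‖u‖ := this
        _ ≤ ε/2 * ‖u‖ * ‖u‖ := mul_le_mul_of_nonneg_right hAn (norm_nonneg u)
    have h2 : |B u| ≤ ε/2 * ‖u‖ * ‖u‖ := by
      have := B.le_opNorm u
      rw [Real.norm_eq_abs] at this
      calc |B u| ≤ ‖B‖ * ‖u‖ := this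
        _ ≤ ε/2 * ‖u‖ * ‖u‖ := mul_le_mul_of_nonneg_right hBn (norm_nonneg u)
    calc |A u - B u| ≤ |A u| + |B u| := abs_sub _ _
      _ ≤ ε/2 * ‖u‖ * ‖u‖ + ε/2 * ‖u‖ * ‖u‖ := add_le_add h1 h2
      _ = ε * ‖u‖ ^ 2 := by ring
  rw [hslope] at hder
  rw [quadForm_negHess g hg u]
  have : 2 * g 0 - g u - g (-u) - -(D2 u u)
      = -((g u + g (-u) - C - 2 * g 0) / (1 - 0)) := by
    rw [hC]
    ring
  rw [this, abs_neg]
  exact hder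

end AuxTaylor

/-- Translation-invariant kernels `f(x,y) = g(x−y)`: any path `γ` in `ℳ`
with end-points `a, b` satisfies `l(γ) ≥ ⟨φ⁻¹(b) − φ⁻¹(a), M(φ⁻¹(b) − φ⁻¹(a))⟩^{1/2}`,
where `M = −Hess g(0)`. -/
theorem translation_invariant_length_lower_bound
    {d : ℕ} (hd : 1 ≤ d)
    (Z : Set (EuclideanSpace ℝ (Fin d))) (hZ : IsCompact Z) (hZconv : Convex ℝ Z)
    (g : EuclideanSpace ℝ (Fin d) → ℝ) (hg : ContDiff ℝ 2 g)
    (hM : (negHess g).PosDef)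
    (φ : EuclideanSpace ℝ (Fin d) → l2)
    (hφ : ∀ x ∈ Z, ∀ y ∈ Z, (inner ℝ (φ x) (φ y) : ℝ) = g (x - y))
    -- Assumption 1
    (hA1 : ∀ x ∈ Z, ∀ y ∈ Z, x ≠ y → ∃ a ∈ Z, g (x - a) ≠ g (y - a))
    -- φ⁻¹ : the inverse of φ on ℳ
    (φinv : l2 → EuclideanSpace ℝ (Fin d)) (hφinv : ∀ x ∈ Z, φinv (φ x) = x)
    (a b : l2) (ha : a ∈ φ '' Z) (hb : b ∈ φ '' Z)
    (γ : ℝ → l2) (hγ : IsPathIn (φ '' Z) a b γ) :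
    ENNReal.ofReal (Real.sqrt (quadForm (negHess g) (φinv b - φinv a))) ≤ pathLength γ := by
  classical
  obtain ⟨hγc, hγmem, hγ0, hγ1⟩ := hγ
  set M := negHess g with hMdef
  -- norm identity on Z
  have hnorm2 : ∀ p ∈ Z, ∀ q ∈ Z, ‖φ q - φ p‖ ^ 2 = 2 * g 0 - 2 * g (q - p) := by
    intro p hp q hq
    rw [@norm_sub_sq_real]
    have e1 : ‖φ q‖ ^ 2 = g 0 := by
      rw [← real_inner_self_eq_norm_sq, hφ q hq q hq, sub_self]
    have e2 : ‖φ p‖ ^ 2 = g 0 := by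
      rw [← real_inner_self_eq_norm_sq, hφ p hp p hp, sub_self]
    rw [e1, e2, hφ q hq p hp]
    ring
  have hgsym : ∀ p ∈ Z, ∀ q ∈ Z, g (p - q) = g (q - p) := by
    intro p hp q hq
    rw [← hφ p hp q hq, ← hφ q hq p hp, real_inner_comm]
  -- φ is continuous on Z
  have hφcont : ContinuousOn φ Z := by
    intro p hp
    have hform : ∀ q ∈ Z, dist (φ q) (φ p) = Real.sqrt (2 * g 0 - 2 * g (q - p)) := by
      intro q hq
      rw [dist_eq_norm, ← Real.sqrt_sq (norm_nonneg (φ q - φ p)), hnorm2 p hp q hq]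
    have hcont2 : Filter.Tendsto (fun q => Real.sqrt (2 * g 0 - 2 * g (q - p)))
        (nhdsWithin p Z) (nhds 0) := by
      have hc : Continuous (fun q : EuclideanSpace ℝ (Fin d) =>
          Real.sqrt (2 * g 0 - 2 * g (q - p))) := by
        have := hg.continuous
        fun_prop
      have hval : Real.sqrt (2 * g 0 - 2 * g (p - p)) = 0 := by
        rw [sub_self]
        simp
      have h5 := (hc.tendsto p).mono_left (nhdsWithin_le_nhds (s := Z))
      rwa [hval] at h5
    have : Filter.Tendsto (fun q => dist (φ q) (φ p)) (nhdsWithin p Z) (nhds 0) := by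
      refine hcont2.congr' ?_
      filter_upwards [self_mem_nhdsWithin] with q hq
      exact (hform q hq).symm
    exact tendsto_iff_dist_tendsto_zero.mpr this
  -- inverse facts
  have hmemZ : ∀ t ∈ Icc (0:ℝ) 1, φinv (γ t) ∈ Z ∧ φ (φinv (γ t)) = γ t := by
    intro t ht
    obtain ⟨z, hz, hzeq⟩ := hγmem t ht
    rw [← hzeq, hφinv z hz]
    exact ⟨hz, rfl⟩
  -- continuity of φinv ∘ γ on [0,1]
  have hxcont : ContinuousOn (fun t => φinv (γ t)) (Icc (0:ℝ) 1) := by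
    haveI : CompactSpace Z := isCompact_iff_compactSpace.mp hZ
    set e : Z → l2 := fun z => φ z.1 with he_def
    have he_cont : Continuous e := continuousOn_iff_continuous_restrict.mp hφcont
    have he_inj : Function.Injective e := by
      intro z1 z2 h12
      apply Subtype.ext
      by_contra hne
      obtain ⟨w, hw, hgne⟩ := hA1 z1.1 z1.2 z2.1 z2.2 hne
      apply hgne
      rw [← hφ z1.1 z1.2 w hw, ← hφ z2.1 z2.2 w hw]
      rw [show φ z1.1 = φ z2.1 from h12]
    have he : Topology.IsEmbedding e := (he_cont.isClosedEmbedding he_inj).isEmbedding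
    set X : Icc (0:ℝ) 1 → Z := fun t => ⟨φinv (γ t.1), (hmemZ t.1 t.2).1⟩ with hX_def
    have heX : e ∘ X = (Icc (0:ℝ) 1).restrict γ := funext fun t => (hmemZ t.1 t.2).2
    have hXcont : Continuous X := by
      rw [he.continuous_iff, heX]
      exact continuousOn_iff_continuous_restrict.mp hγc
    refine continuousOn_iff_continuous_restrict.mpr ?_
    exact continuous_subtype_val.comp hXcont
  -- uniform continuity: get fine partitions
  have hxuc : ∀ δ > 0, ∃ n : ℕ, 0 < n ∧ ∀ s ∈ Icc (0:ℝ) 1, ∀ t ∈ Icc (0:ℝ) 1,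
      dist s t ≤ 1 / (n : ℝ) → ‖φinv (γ s) - φinv (γ t)‖ ≤ δ := by
    intro δ hδ
    have huc := isCompact_Icc.uniformContinuousOn_of_continuous hxcont
    rw [Metric.uniformContinuousOn_iff] at huc
    obtain ⟨δ2, hδ2, hucd⟩ := huc δ hδ
    obtain ⟨n, hn⟩ := exists_nat_one_div_lt hδ2
    refine ⟨n + 1, Nat.succ_pos n, fun s hs t ht hst => ?_⟩
    have := hucd s hs t ht (lt_of_le_of_lt hst (by exact_mod_cast hn))
    rw [dist_eq_norm] at this
    exact this.le
  obtain ⟨cQ, hcQ, hcoer⟩ := exists_coercivity (M := M) hd hM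
  -- key bound for each s < 1
  have hkey : ∀ s : ℝ, 0 < s → s < 1 →
      ENNReal.ofReal (s * nM M (φinv b - φinv a)) ≤ pathLength γ := by
    intro s hs0 hs1
    set ε : ℝ := 1 - s ^ 2 with hε_def
    have hε : 0 < ε := by nlinarith
    obtain ⟨δ, hδ, htay⟩ := taylor_bound g hg (cQ * ε) (mul_pos hcQ hε)
    obtain ⟨n, hn0, hunif⟩ := hxuc δ hδ
    have hnR : (0:ℝ) < (n:ℝ) := by exact_mod_cast hn0
    -- the uniform partition
    set P : PathPartition := ⟨n, fun k => (k : ℝ) / n, by simp, div_self hnR.ne', fun k _ =>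
      (div_le_div_iff_of_pos_right hnR).mpr (by exact_mod_cast Nat.le_succ k)⟩ with hP_def
    have hPt : ∀ k, P.t k = (k : ℝ) / n := fun k => rfl
    have hmemIcc : ∀ k ≤ n, P.t k ∈ Icc (0:ℝ) 1 := by
      intro k hk
      rw [hPt]
      constructor
      · positivity
      · rw [div_le_one hnR]
        exact_mod_cast hk
    -- lower bound each chord
    set y : ℕ → EuclideanSpace ℝ (Fin d) := fun k => φinv (γ (P.t k)) with hy_def
    have hyZ : ∀ k ≤ n, y k ∈ Z := fun k hk => (hmemZ _ (hmemIcc k hk)).1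
    have hchord : ∀ k < n, s * nM M (y (k+1) - y k) ≤ ‖γ (P.t (k+1)) - γ (P.t k)‖ := by
      intro k hk
      have hk1 : k + 1 ≤ n := hk
      have hkn : k ≤ n := Nat.le_of_lt hk
      have hpZ : y k ∈ Z := hyZ k hkn
      have hqZ : y (k+1) ∈ Z := hyZ (k+1) hk1
      have hsmall : ‖y (k+1) - y k‖ ≤ δ := by
        apply hunif _ (hmemIcc (k+1) hk1) _ (hmemIcc k hkn)
        rw [hPt, hPt, Real.dist_eq]
        push_cast
        have heq : ((k:ℝ) + 1) / n - (k:ℝ) / n = 1 / n := by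
          rw [div_sub_div_same]
          ring_nf
        rw [heq, abs_of_nonneg (by positivity)]
      set u : EuclideanSpace ℝ (Fin d) := y (k+1) - y k with hu_def
      have htb := htay u hsmall
      have hng : g (-u) = g u := by
        have : -u = y k - y (k+1) := by rw [hu_def]; abel
        rw [this, hu_def]
        exact hgsym _ hpZ _ hqZ
      have hcoeru : cQ * ‖u‖ ^ 2 ≤ quadForm M u := hcoer u
      have hQnn : 0 ≤ quadForm M u := quadForm_nonneg M hM u
      have hlow : s ^ 2 * quadForm M u ≤ 2 * g 0 - 2 * g u := by
        rw [hng] at htb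
        have h1 : 2 * g 0 - g u - g u - quadForm M u ≥ -(cQ * ε * ‖u‖ ^ 2) := by
          have := abs_le.mp htb
          linarith [this.1]
        have h2 : cQ * ε * ‖u‖ ^ 2 ≤ ε * quadForm M u := by
          have := mul_le_mul_of_nonneg_left hcoeru hε.le
          calc cQ * ε * ‖u‖ ^ 2 = ε * (cQ * ‖u‖ ^ 2) := by ring
            _ ≤ ε * quadForm M u := this
        have : s ^ 2 * quadForm M u = quadForm M u - ε * quadForm M u := by
          rw [hε_def]; ring
        linarith
      have hnormchord : ‖γ (P.t (k+1)) - γ (P.t k)‖ ^ 2 = 2 * g 0 - 2 * g u := by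
        have e1 : γ (P.t (k+1)) = φ (y (k+1)) := ((hmemZ _ (hmemIcc _ hk1)).2).symm
        have e2 : γ (P.t k) = φ (y k) := ((hmemZ _ (hmemIcc _ hkn)).2).symm
        rw [e1, e2, hnorm2 _ hpZ _ hqZ]
      -- conclude via sqrt monotonicity
      have hs2 : s * nM M u = Real.sqrt (s ^ 2 * quadForm M u) := by
        rw [Real.sqrt_mul (sq_nonneg s), Real.sqrt_sq hs0.le]
        rfl
      rw [hs2]
      calc Real.sqrt (s ^ 2 * quadForm M u)
          ≤ Real.sqrt (‖γ (P.t (k+1)) - γ (P.t k)‖ ^ 2) := by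
            apply Real.sqrt_le_sqrt
            rw [hnormchord]
            exact hlow
        _ = ‖γ (P.t (k+1)) - γ (P.t k)‖ := Real.sqrt_sq (norm_nonneg _)
    -- sum up
    have hsum : s * nM M (φinv b - φinv a) ≤ chiSum γ P := by
      have htel := nM_telescope (M := M) hM y n
      have hba : y n - y 0 = φinv b - φinv a := by
        have h1 : ((n:ℕ):ℝ) / (n:ℝ) = 1 := div_self hnR.ne'
        have h0 : ((0:ℕ):ℝ) / (n:ℝ) = 0 := by simp
        show φinv (γ (((n:ℕ):ℝ) / n)) - φinv (γ (((0:ℕ):ℝ) / n)) = _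
        rw [h1, h0, hγ0, hγ1]
      have hsum2 : ∑ k ∈ Finset.range n, s * nM M (y (k+1) - y k) ≤ chiSum γ P := by
        unfold chiSum
        apply Finset.sum_le_sum
        intro k hk
        exact hchord k (Finset.mem_range.mp hk)
      calc s * nM M (φinv b - φinv a) = s * nM M (y n - y 0) := by rw [hba]
        _ ≤ s * ∑ k ∈ Finset.range n, nM M (y (k+1) - y k) :=
            mul_le_mul_of_nonneg_left htel hs0.le
        _ = ∑ k ∈ Finset.range n, s * nM M (y (k+1) - y k) := Finset.mul_sum _ _ _
        _ ≤ chiSum γ P := hsum2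
    calc ENNReal.ofReal (s * nM M (φinv b - φinv a))
        ≤ ENNReal.ofReal (chiSum γ P) := ENNReal.ofReal_le_ofReal hsum
      _ ≤ pathLength γ := le_iSup (fun P => ENNReal.ofReal (chiSum γ P)) P
  -- pass to the limit s → 1⁻
  show ENNReal.ofReal (nM M (φinv b - φinv a)) ≤ pathLength γ
  rcases eq_or_ne (pathLength γ) ⊤ with htop | hfin
  · rw [htop]; exact le_top
  · set T := (pathLength γ).toReal with hT
    set R := nM M (φinv b - φinv a) with hR
    have hRnn : 0 ≤ R := Real.sqrt_nonneg _
    have hsR : ∀ s : ℝ, 0 < s → s < 1 → s * R ≤ T := by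
      intro s hs0 hs1
      exact (ENNReal.ofReal_le_iff_le_toReal hfin).mp (hkey s hs0 hs1)
    have hRT : R ≤ T := by
      have htend : Filter.Tendsto (fun s : ℝ => s * R) (nhdsWithin 1 (Iio 1)) (nhds R) := by
        have : Filter.Tendsto (fun s : ℝ => s * R) (nhds 1) (nhds (1 * R)) :=
          (continuous_mul_right R).tendsto 1
        rw [one_mul] at this
        exact this.mono_left nhdsWithin_le_nhds
      refine le_of_tendsto htend ?_
      filter_upwards [Ioo_mem_nhdsLT_of_mem (⟨zero_lt_one, le_refl (1:ℝ)⟩ : (1:ℝ) ∈ Ioc 0 1)]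
        with s hs
      exact hsR s hs.1 hs.2
    calc ENNReal.ofReal R ≤ ENNReal.ofReal T := ENNReal.ofReal_le_ofReal hRT
      _ = pathLength γ := ENNReal.ofReal_toReal hfin
end
end

section
/- In the inner-product-kernel setting on the sphere, for any a, b ∈ ℳ and any path γ in ℳ with end-points a, b one has l(γ) ≥ g′(1)^{1/2} arccos⟨φ⁻¹(a), φ⁻¹(b)⟩. -/
open Set
open scoped ENNReal BigOperators

noncomputable section

open Filter Topology

private lemma arccos_antitone {x y : ℝ} (h : x ≤ y) : Real.arccos y ≤ Real.arccos x := by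
  have := Real.monotone_arcsin h
  simp only [Real.arccos]
  linarith

private lemma arccos_triangle {E : Type*} [NormedAddCommGroup E] [InnerProductSpace ℝ E]
    {u v w : E} (hu : ‖u‖ = 1) (hv : ‖v‖ = 1) (hw : ‖w‖ = 1) :
    Real.arccos (inner ℝ u w : ℝ) ≤ Real.arccos (inner ℝ u v : ℝ) + Real.arccos (inner ℝ v w : ℝ) := by
  have hc1 : |(inner ℝ u v : ℝ)| ≤ 1 := by
    simpa [hu, hv] using abs_real_inner_le_norm u v
  have hc2 : |(inner ℝ v w : ℝ)| ≤ 1 := by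
    simpa [hv, hw] using abs_real_inner_le_norm v w
  set c1 : ℝ := inner ℝ u v with hc1d
  set c2 : ℝ := inner ℝ v w with hc2d
  set α := Real.arccos c1 with hαd
  set β := Real.arccos c2 with hβd
  rcases le_or_gt Real.pi (α + β) with hπ | hπ
  · exact (Real.arccos_le_pi _).trans hπ
  have hαβ0 : 0 ≤ α + β := add_nonneg (Real.arccos_nonneg _) (Real.arccos_nonneg _)
  have hvv : (inner ℝ v v : ℝ) = 1 := by
    rw [real_inner_self_eq_norm_sq, hv]; norm_num
  have huu : (inner ℝ u u : ℝ) = 1 := by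
    rw [real_inner_self_eq_norm_sq, hu]; norm_num
  have hww : (inner ℝ w w : ℝ) = 1 := by
    rw [real_inner_self_eq_norm_sq, hw]; norm_num
  have hup : ‖u - c1 • v‖ = Real.sqrt (1 - c1^2) := by
    have h2 : ‖u - c1 • v‖^2 = 1 - c1^2 := by
      rw [norm_sub_sq_real, real_inner_smul_right, norm_smul, hu, hv]
      simp only [Real.norm_eq_abs, mul_one, mul_pow, sq_abs]
      simp only [← hc1d, ← hc2d]; ring
    rw [← h2, Real.sqrt_sq (norm_nonneg _)]
  have hwp : ‖w - c2 • v‖ = Real.sqrt (1 - c2^2) := by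
    have h2 : ‖w - c2 • v‖^2 = 1 - c2^2 := by
      rw [norm_sub_sq_real, real_inner_smul_right, norm_smul, hw, hv]
      simp only [Real.norm_eq_abs, mul_one, mul_pow, sq_abs]
      rw [real_inner_comm]; simp only [← hc1d, ← hc2d]; ring
    rw [← h2, Real.sqrt_sq (norm_nonneg _)]
  have hinner : (inner ℝ (u - c1 • v) (w - c2 • v) : ℝ) = (inner ℝ u w : ℝ) - c1 * c2 := by
    rw [inner_sub_left, inner_sub_right, inner_sub_right, real_inner_smul_left,
        real_inner_smul_left, real_inner_smul_right, real_inner_smul_right, hvv]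
    simp only [← hc1d, ← hc2d]
    ring
  have hCS := (abs_le.mp (abs_real_inner_le_norm (u - c1 • v) (w - c2 • v))).1
  rw [hinner, hup, hwp] at hCS
  have hcos : Real.cos (α + β) ≤ (inner ℝ u w : ℝ) := by
    rw [Real.cos_add, hαd, hβd, Real.cos_arccos (abs_le.mp hc1).1 (abs_le.mp hc1).2,
        Real.cos_arccos (abs_le.mp hc2).1 (abs_le.mp hc2).2,
        Real.sin_arccos, Real.sin_arccos]
    linarith
  calc Real.arccos (inner ℝ u w : ℝ) ≤ Real.arccos (Real.cos (α + β)) := arccos_antitone hcos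
    _ = α + β := Real.arccos_cos hαβ0 hπ.le

private lemma arccos_chain {E : Type*} [NormedAddCommGroup E] [InnerProductSpace ℝ E]
    (u : ℕ → E) (hu : ∀ k, ‖u k‖ = 1) (n : ℕ) :
    Real.arccos (inner ℝ (u 0) (u n) : ℝ) ≤
      ∑ k ∈ Finset.range n, Real.arccos (inner ℝ (u k) (u (k+1)) : ℝ) := by
  induction n with
  | zero =>
    have : (inner ℝ (u 0) (u 0) : ℝ) = 1 := by
      rw [real_inner_self_eq_norm_sq, hu 0]; norm_num
    rw [this, Real.arccos_one]; simp
  | succ n ih =>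
    rw [Finset.sum_range_succ]
    calc Real.arccos (inner ℝ (u 0) (u (n+1)) : ℝ)
        ≤ Real.arccos (inner ℝ (u 0) (u n) : ℝ) + Real.arccos (inner ℝ (u n) (u (n+1)) : ℝ) :=
          arccos_triangle (hu 0) (hu n) (hu (n+1))
      _ ≤ _ := by exact add_le_add_left ih _

private lemma key_limit (g : ℝ → ℝ) (hg : ContDiff ℝ 2 g) {ε : ℝ} (hε : 0 < ε) :
    ∃ δ > 0, ∀ ρ : ℝ, 0 < ρ → ρ ≤ δ →
      (deriv g 1 - ε) * ρ^2 ≤ 2 * (g 1 - g (Real.cos ρ)) := by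
  have hder : HasDerivAt g (deriv g 1) 1 :=
    ((hg.differentiable (by norm_num)).differentiableAt).hasDerivAt
  have hslope : Tendsto (slope g 1) (𝓝[≠] (1:ℝ)) (𝓝 (deriv g 1)) :=
    hasDerivAt_iff_tendsto_slope.mp hder
  -- sin y / y → 1
  have hsin : Tendsto (fun y : ℝ => Real.sin y / y) (𝓝[≠] (0:ℝ)) (𝓝 1) := by
    have h0 : HasDerivAt Real.sin 1 0 := by
      simpa using Real.hasDerivAt_sin 0
    have := hasDerivAt_iff_tendsto_slope.mp h0
    refine this.congr' ?_
    filter_upwards [self_mem_nhdsWithin] with y hy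
    simp [slope_def_field]
  -- cos tends to 1 within {≠ 1}
  have hIoo : Ioo (0:ℝ) Real.pi ∈ 𝓝[>] (0:ℝ) :=
    Ioo_mem_nhdsGT_of_mem ⟨le_refl 0, Real.pi_pos⟩
  have hcoslt : ∀ ρ ∈ Ioo (0:ℝ) Real.pi, Real.cos ρ < 1 := by
    intro ρ hρ
    refine lt_of_le_of_ne (Real.cos_le_one ρ) ?_
    intro h
    have := (Real.cos_eq_one_iff_of_lt_of_lt (x := ρ)
      (by linarith [hρ.1, hρ.2, Real.pi_pos]) (by linarith [hρ.1, hρ.2, Real.pi_pos])).mp h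
    exact absurd this (ne_of_gt hρ.1)
  have hcos_to : Tendsto Real.cos (𝓝[>] (0:ℝ)) (𝓝[≠] (1:ℝ)) := by
    rw [tendsto_nhdsWithin_iff]
    constructor
    · have : Tendsto Real.cos (𝓝 (0:ℝ)) (𝓝 (Real.cos 0)) := Real.continuous_cos.tendsto 0
      simpa using this.mono_left nhdsWithin_le_nhds
    · filter_upwards [hIoo] with ρ hρ
      exact ne_of_lt (hcoslt ρ hρ)
  have hA : Tendsto (fun ρ => slope g 1 (Real.cos ρ)) (𝓝[>] (0:ℝ)) (𝓝 (deriv g 1)) :=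
    hslope.comp hcos_to
  have hhalf : Tendsto (fun ρ : ℝ => ρ / 2) (𝓝[>] (0:ℝ)) (𝓝[≠] (0:ℝ)) := by
    rw [tendsto_nhdsWithin_iff]
    constructor
    · have : Tendsto (fun ρ : ℝ => ρ / 2) (𝓝 (0:ℝ)) (𝓝 (0 / 2)) :=
        (continuous_id.div_const 2).tendsto 0
      simpa using this.mono_left nhdsWithin_le_nhds
    · filter_upwards [self_mem_nhdsWithin] with ρ hρ
      simpa using ne_of_gt (half_pos (Set.mem_Ioi.mp hρ))
  have hB : Tendsto (fun ρ : ℝ => (Real.sin (ρ/2) / (ρ/2))^2) (𝓝[>] (0:ℝ)) (𝓝 1) := by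
    have := (hsin.comp hhalf).pow 2
    simpa using this
  have hq : Tendsto (fun ρ => slope g 1 (Real.cos ρ) * (Real.sin (ρ/2) / (ρ/2))^2)
      (𝓝[>] (0:ℝ)) (𝓝 (deriv g 1)) := by
    have := hA.mul hB
    simpa using this
  have hev : ∀ᶠ ρ in 𝓝[>] (0:ℝ),
      deriv g 1 - ε < slope g 1 (Real.cos ρ) * (Real.sin (ρ/2) / (ρ/2))^2 :=
    hq.eventually (eventually_gt_nhds (by linarith))
  have hfinal : ∀ᶠ ρ in 𝓝[>] (0:ℝ),
      (deriv g 1 - ε) * ρ^2 ≤ 2 * (g 1 - g (Real.cos ρ)) := by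
    filter_upwards [hev, hIoo] with ρ hρ1 hρ2
    have hρpos : (0:ℝ) < ρ := hρ2.1
    have hc : Real.cos ρ < 1 := hcoslt ρ hρ2
    have hid : slope g 1 (Real.cos ρ) * (Real.sin (ρ/2) / (ρ/2))^2
        = 2 * (g 1 - g (Real.cos ρ)) / ρ^2 := by
      have hs2 : Real.sin (ρ/2)^2 = (1 - Real.cos ρ) / 2 := by
        have := Real.sin_sq_eq_half_sub (ρ/2)
        rw [show 2 * (ρ/2) = ρ by ring] at this
        linarith
      rw [slope_def_field, div_pow, hs2]
      have h1 : Real.cos ρ - 1 ≠ 0 := by linarith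
      have h2 : ρ ≠ 0 := ne_of_gt hρpos
      field_simp
      ring
    rw [hid] at hρ1
    calc (deriv g 1 - ε) * ρ^2 ≤ 2 * (g 1 - g (Real.cos ρ)) / ρ^2 * ρ^2 := by
          exact mul_le_mul_of_nonneg_right (le_of_lt hρ1) (by positivity)
      _ = 2 * (g 1 - g (Real.cos ρ)) := by field_simp
  rcases mem_nhdsGT_iff_exists_Ioc_subset.mp hfinal with ⟨δ, hδ, hsub⟩
  exact ⟨δ, hδ, fun ρ h1 h2 => hsub ⟨h1, h2⟩⟩
/-- Inner-product kernels `f(x,y) = g(⟨x,y⟩)` on the unit sphere: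
any path `γ` in `ℳ` with end-points `a, b` satisfies
`l(γ) ≥ g′(1)^{1/2} arccos⟨φ⁻¹(a), φ⁻¹(b)⟩`. -/
theorem inner_product_kernel_length_lower_bound
    {d : ℕ} (hd : 2 ≤ d)
    (g : ℝ → ℝ) (hg : ContDiff ℝ 2 g)
    (hg1 : 0 < deriv g 1) (hg2 : 0 ≤ deriv (deriv g) 1)
    (φ : EuclideanSpace ℝ (Fin d) → l2)
    (hφ : ∀ x ∈ Metric.sphere (0 : EuclideanSpace ℝ (Fin d)) 1,
      ∀ y ∈ Metric.sphere (0 : EuclideanSpace ℝ (Fin d)) 1,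
        (inner ℝ (φ x) (φ y) : ℝ) = g (inner ℝ x y : ℝ))
    -- Assumption 1
    (hA1 : ∀ x ∈ Metric.sphere (0 : EuclideanSpace ℝ (Fin d)) 1,
      ∀ y ∈ Metric.sphere (0 : EuclideanSpace ℝ (Fin d)) 1, x ≠ y →
        ∃ a ∈ Metric.sphere (0 : EuclideanSpace ℝ (Fin d)) 1,
          g (inner ℝ x a : ℝ) ≠ g (inner ℝ y a : ℝ))
    -- φ⁻¹ : the inverse of φ on ℳ
    (φinv : l2 → EuclideanSpace ℝ (Fin d))
    (hφinv : ∀ x ∈ Metric.sphere (0 : EuclideanSpace ℝ (Fin d)) 1, φinv (φ x) = x)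
    (a b : l2)
    (ha : a ∈ φ '' Metric.sphere (0 : EuclideanSpace ℝ (Fin d)) 1)
    (hb : b ∈ φ '' Metric.sphere (0 : EuclideanSpace ℝ (Fin d)) 1)
    (γ : ℝ → l2) (hγ : IsPathIn (φ '' Metric.sphere (0 : EuclideanSpace ℝ (Fin d)) 1) a b γ) :
    ENNReal.ofReal (Real.sqrt (deriv g 1) *
        Real.arccos (inner ℝ (φinv a) (φinv b) : ℝ)) ≤ pathLength γ := by
  obtain ⟨hγc, hγmem, hγ0, hγ1⟩ := hγ
  obtain ⟨xa, hxa, rfl⟩ := ha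
  obtain ⟨xb, hxb, rfl⟩ := hb
  rw [hφinv xa hxa, hφinv xb hxb]
  set S := Metric.sphere (0 : EuclideanSpace ℝ (Fin d)) 1 with hSdef
  -- basic facts
  have hnorm1 : ∀ u : EuclideanSpace ℝ (Fin d), u ∈ S → ‖u‖ = 1 := fun u hu =>
    mem_sphere_zero_iff_norm.mp hu
  have hinner_self : ∀ u ∈ S, (inner ℝ u u : ℝ) = 1 := fun u hu => by
    rw [real_inner_self_eq_norm_sq, hnorm1 u hu]; norm_num
  have habs : ∀ u ∈ S, ∀ v ∈ S, |(inner ℝ u v : ℝ)| ≤ 1 := fun u hu v hv => by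
    simpa [hnorm1 u hu, hnorm1 v hv] using abs_real_inner_le_norm u v
  have hφnorm : ∀ u ∈ S, ∀ v ∈ S, ‖φ u - φ v‖^2 = 2*(g 1 - g (inner ℝ u v : ℝ)) := by
    intro u hu v hv
    have h1 : ‖φ u‖^2 = g 1 := by
      rw [← real_inner_self_eq_norm_sq, hφ u hu u hu, hinner_self u hu]
    have h2 : ‖φ v‖^2 = g 1 := by
      rw [← real_inner_self_eq_norm_sq, hφ v hv v hv, hinner_self v hv]
    rw [norm_sub_sq_real, h1, h2, hφ u hu v hv]; ring
  -- the spherical curve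
  set x : ℝ → EuclideanSpace ℝ (Fin d) := fun t => φinv (γ t) with hxdef
  have hx : ∀ t ∈ Icc (0:ℝ) 1, x t ∈ S ∧ φ (x t) = γ t := by
    intro t ht
    obtain ⟨z, hz, hzeq⟩ := hγmem t ht
    have hxt : x t = z := by rw [hxdef]; simp only; rw [← hzeq, hφinv z hz]
    rw [hxt]; exact ⟨hz, hzeq⟩
  have hx0 : x 0 = xa := by
    rw [hxdef]; simp only; rw [hγ0, hφinv xa hxa]
  have hx1 : x 1 = xb := by
    rw [hxdef]; simp only; rw [hγ1, hφinv xb hxb]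
  -- continuity of x on Icc
  have hψc : Continuous (fun u : S => φ u) := by
    rw [continuous_iff_continuousAt]
    intro u
    rw [ContinuousAt, tendsto_iff_dist_tendsto_zero]
    have hdist : ∀ v : S, dist (φ (v : EuclideanSpace ℝ (Fin d))) (φ u)
        = Real.sqrt (2*(g 1 - g (inner ℝ (v : EuclideanSpace ℝ (Fin d)) (u : EuclideanSpace ℝ (Fin d)) : ℝ))) := by
      intro v
      rw [dist_eq_norm, ← Real.sqrt_sq (norm_nonneg (φ (v:EuclideanSpace ℝ (Fin d)) - φ u)),
        hφnorm _ v.2 _ u.2]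
    have hc : Continuous (fun v : S =>
        Real.sqrt (2*(g 1 - g (inner ℝ (v : EuclideanSpace ℝ (Fin d)) (u : EuclideanSpace ℝ (Fin d)) : ℝ)))) := by
      apply Real.continuous_sqrt.comp
      apply Continuous.mul continuous_const
      apply Continuous.sub continuous_const
      exact hg.continuous.comp ((continuous_subtype_val.inner continuous_const))
    have hval : Real.sqrt (2*(g 1 - g (inner ℝ (u : EuclideanSpace ℝ (Fin d)) (u : EuclideanSpace ℝ (Fin d)) : ℝ))) = 0 := by
      rw [hinner_self _ u.2]; simp
    have h3 := hc.tendsto u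
    rw [hval] at h3
    exact Tendsto.congr (fun v => (hdist v).symm) h3
  have hψinj : Function.Injective (fun u : S => φ u) := by
    intro u v h
    simp only at h
    have h2 := congrArg φinv h
    rw [hφinv _ u.2, hφinv _ v.2] at h2
    exact Subtype.ext h2
  have hemb : IsEmbedding (fun u : S => φ u) := (hψc.isClosedEmbedding hψinj).isEmbedding
  have hXc : Continuous (fun t : Icc (0:ℝ) 1 => (⟨x t, (hx t t.2).1⟩ : S)) := by
    rw [hemb.continuous_iff]
    have h1 : Continuous (fun t : Icc (0:ℝ) 1 => γ (t:ℝ)) := hγc.restrict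
    exact h1.congr (fun t => ((hx t t.2).2).symm)
  have hxc : Continuous (fun t : Icc (0:ℝ) 1 => x (t:ℝ)) := continuous_subtype_val.comp hXc
  have hUC : UniformContinuous (fun t : Icc (0:ℝ) 1 => x (t:ℝ)) :=
    CompactSpace.uniformContinuous_of_continuous hxc
  set d1 := deriv g 1 with hd1def
  set ρab := Real.arccos (inner ℝ xa xb : ℝ) with hρabdef
  -- Main claim for each ε
  have main : ∀ ε ∈ Ioo (0:ℝ) d1,
      ENNReal.ofReal (Real.sqrt (d1 - ε) * ρab) ≤ pathLength γ := by
    rintro ε ⟨hε0, hεd⟩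
    obtain ⟨δ, hδ0, hδ⟩ := key_limit g hg hε0
    have hpair : ∀ u ∈ S, ∀ v ∈ S, Real.arccos (inner ℝ u v : ℝ) ≤ δ →
        Real.sqrt (d1 - ε) * Real.arccos (inner ℝ u v : ℝ) ≤ ‖φ u - φ v‖ := by
      intro u hu v hv hle
      rcases eq_or_lt_of_le (Real.arccos_nonneg (inner ℝ u v : ℝ)) with h0 | h0
      · rw [← h0, mul_zero]; exact norm_nonneg _
      · have hkey := hδ _ h0 hle
        have hcos : Real.cos (Real.arccos (inner ℝ u v : ℝ)) = (inner ℝ u v : ℝ) :=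
          Real.cos_arccos (abs_le.mp (habs u hu v hv)).1 (abs_le.mp (habs u hu v hv)).2
        rw [hcos] at hkey
        have hsq : (d1 - ε) * (Real.arccos (inner ℝ u v : ℝ))^2 ≤ ‖φ u - φ v‖^2 := by
          rw [hφnorm u hu v hv]; exact hkey
        have h5 := Real.sqrt_le_sqrt hsq
        rwa [Real.sqrt_mul (by linarith : (0:ℝ) ≤ d1 - ε), Real.sqrt_sq h0.le,
          Real.sqrt_sq (norm_nonneg _)] at h5
    obtain ⟨ε₂, hε₂0, hε₂⟩ : ∃ ε₂ > 0, ∀ r : ℝ, |r - 1| < ε₂ → Real.arccos r < δ := by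
      have hcont := Real.continuous_arccos.continuousAt (x := (1:ℝ))
      rw [Metric.continuousAt_iff] at hcont
      obtain ⟨ε₂, h1, h2⟩ := hcont δ hδ0
      refine ⟨ε₂, h1, fun r hr => ?_⟩
      have h3 := h2 (by simpa [Real.dist_eq] using hr)
      simpa [Real.dist_eq, Real.arccos_one, abs_of_nonneg (Real.arccos_nonneg r)] using h3
    rw [Metric.uniformContinuous_iff] at hUC
    obtain ⟨η, hη0, hη⟩ := hUC (Real.sqrt (2*ε₂)) (Real.sqrt_pos.mpr (by linarith))
    have hsmall : ∀ s t : Icc (0:ℝ) 1, dist s t < η →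
        Real.arccos (inner ℝ (x (s:ℝ)) (x (t:ℝ)) : ℝ) < δ := by
      intro s t hst
      have hd2 := hη hst
      have hms := (hx s s.2).1
      have hmt := (hx t t.2).1
      rw [dist_eq_norm] at hd2
      have hnn : ‖x (s:ℝ) - x (t:ℝ)‖^2 < 2*ε₂ := by
        calc ‖x (s:ℝ) - x (t:ℝ)‖^2 < (Real.sqrt (2*ε₂))^2 :=
              pow_lt_pow_left₀ hd2 (norm_nonneg _) (by norm_num)
          _ = 2*ε₂ := Real.sq_sqrt (by linarith)
      have hinner_eq : ‖x (s:ℝ) - x (t:ℝ)‖^2 = 2 - 2*(inner ℝ (x (s:ℝ)) (x (t:ℝ)) : ℝ) := by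
        have e1 : ‖x (s:ℝ)‖^2 = 1 := by rw [hnorm1 _ hms]; norm_num
        have e2 : ‖x (t:ℝ)‖^2 = 1 := by rw [hnorm1 _ hmt]; norm_num
        rw [norm_sub_sq_real, e1, e2]; ring
      have h1 : 1 - (inner ℝ (x (s:ℝ)) (x (t:ℝ)) : ℝ) < ε₂ := by
        rw [hinner_eq] at hnn; linarith
      have h2 : (inner ℝ (x (s:ℝ)) (x (t:ℝ)) : ℝ) ≤ 1 := (abs_le.mp (habs _ hms _ hmt)).2
      apply hε₂
      rw [abs_lt]; constructor <;> linarith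
    obtain ⟨n0, hn0⟩ := exists_nat_one_div_lt hη0
    set m : ℕ := n0 + 1 with hmdef
    have hmR : (0:ℝ) < m := by positivity
    have hmn : (m:ℝ) ≠ 0 := ne_of_gt hmR
    have h1m : 1/(m:ℝ) < η := by
      rw [hmdef]; push_cast; exact hn0
    have hPmono : ∀ k : ℕ, k < m → ((k:ℝ)/(m:ℝ)) ≤ ((↑(k+1):ℝ)/(m:ℝ)) := by
      intro k _
      gcongr
      exact_mod_cast Nat.le_succ k
    set P : PathPartition := ⟨m, fun k => (k:ℝ)/(m:ℝ), by simp, by field_simp, hPmono⟩ with hPdef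
    have htIcc : ∀ k : ℕ, k ≤ m → ((k:ℝ)/(m:ℝ)) ∈ Icc (0:ℝ) 1 := by
      intro k hk
      constructor
      · positivity
      · rw [div_le_one hmR]; exact_mod_cast hk
    -- consecutive points are close
    have hclose : ∀ k : ℕ, k < m →
        Real.arccos (inner ℝ (x ((k:ℝ)/(m:ℝ))) (x ((↑(k+1):ℝ)/(m:ℝ))) : ℝ) < δ := by
      intro k hk
      have hk1 : k + 1 ≤ m := hk
      refine hsmall ⟨(k:ℝ)/(m:ℝ), htIcc k hk.le⟩ ⟨(↑(k+1):ℝ)/(m:ℝ), htIcc (k+1) hk1⟩ ?_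
      rw [Subtype.dist_eq]
      simp only [Real.dist_eq]
      have : ((k:ℝ)/(m:ℝ) - (↑(k+1):ℝ)/(m:ℝ)) = -(1/(m:ℝ)) := by
        push_cast; field_simp; ring
      rw [this, abs_neg, abs_of_pos (by positivity)]
      exact h1m
    -- per-segment estimate
    have hterm : ∀ k ∈ Finset.range m,
        Real.sqrt (d1 - ε) * Real.arccos (inner ℝ (x ((k:ℝ)/(m:ℝ))) (x ((↑(k+1):ℝ)/(m:ℝ))) : ℝ)
          ≤ ‖γ ((↑(k+1):ℝ)/(m:ℝ)) - γ ((k:ℝ)/(m:ℝ))‖ := by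
      intro k hk
      rw [Finset.mem_range] at hk
      have hu := hx ((k:ℝ)/(m:ℝ)) (htIcc k hk.le)
      have hv := hx ((↑(k+1):ℝ)/(m:ℝ)) (htIcc (k+1) hk)
      have h5 := hpair _ hu.1 _ hv.1 (hclose k hk).le
      rw [hu.2, hv.2, norm_sub_rev] at h5
      exact h5
    -- chain inequality
    have hchain : ρab ≤ ∑ k ∈ Finset.range m,
        Real.arccos (inner ℝ (x ((k:ℝ)/(m:ℝ))) (x ((↑(k+1):ℝ)/(m:ℝ))) : ℝ) := by
      have hun : ∀ k : ℕ, ‖x ((↑(min k m):ℝ)/(m:ℝ))‖ = 1 := fun k =>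
        hnorm1 _ (hx _ (htIcc _ (min_le_right k m))).1
      have hch := arccos_chain (fun k => x ((↑(min k m):ℝ)/(m:ℝ))) hun m
      have he0 : x ((↑(min 0 m):ℝ)/(m:ℝ)) = xa := by
        rw [show min 0 m = 0 from Nat.zero_min m]
        simpa using hx0
      have he1 : x ((↑(min m m):ℝ)/(m:ℝ)) = xb := by
        rw [min_self, div_self hmn]
        exact hx1
      rw [he0, he1] at hch
      refine hch.trans (le_of_eq (Finset.sum_congr rfl ?_))
      intro k hk
      rw [Finset.mem_range] at hk
      rw [min_eq_left hk.le, min_eq_left (by omega : k + 1 ≤ m)]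
    -- combine
    have hsum : Real.sqrt (d1 - ε) * ρab ≤ chiSum γ P := by
      calc Real.sqrt (d1 - ε) * ρab
          ≤ Real.sqrt (d1 - ε) * ∑ k ∈ Finset.range m,
              Real.arccos (inner ℝ (x ((k:ℝ)/(m:ℝ))) (x ((↑(k+1):ℝ)/(m:ℝ))) : ℝ) :=
            mul_le_mul_of_nonneg_left hchain (Real.sqrt_nonneg _)
        _ = ∑ k ∈ Finset.range m, Real.sqrt (d1 - ε) *
              Real.arccos (inner ℝ (x ((k:ℝ)/(m:ℝ))) (x ((↑(k+1):ℝ)/(m:ℝ))) : ℝ) :=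
            Finset.mul_sum _ _ _
        _ ≤ ∑ k ∈ Finset.range m, ‖γ ((↑(k+1):ℝ)/(m:ℝ)) - γ ((k:ℝ)/(m:ℝ))‖ :=
            Finset.sum_le_sum hterm
        _ = chiSum γ P := by
            rw [chiSum, hPdef]
    calc ENNReal.ofReal (Real.sqrt (d1 - ε) * ρab)
        ≤ ENNReal.ofReal (chiSum γ P) := ENNReal.ofReal_le_ofReal hsum
      _ ≤ pathLength γ := le_iSup (fun Q : PathPartition => ENNReal.ofReal (chiSum γ Q)) P
  -- limit ε → 0
  have hten : Tendsto (fun ε : ℝ => ENNReal.ofReal (Real.sqrt (d1 - ε) * ρab)) (𝓝[>] (0:ℝ))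
      (𝓝 (ENNReal.ofReal (Real.sqrt (d1 - 0) * ρab))) := by
    apply Filter.Tendsto.mono_left ?_ nhdsWithin_le_nhds
    apply (ENNReal.continuous_ofReal.tendsto _).comp
    exact ((((continuous_const.sub continuous_id).sqrt).mul continuous_const).tendsto 0)
  have hev : ∀ᶠ ε in 𝓝[>] (0:ℝ),
      ENNReal.ofReal (Real.sqrt (d1 - ε) * ρab) ≤ pathLength γ := by
    filter_upwards [Ioo_mem_nhdsGT_of_mem (by constructor <;> [exact le_refl 0; exact hg1] :
      (0:ℝ) ∈ Ico (0:ℝ) d1)] with ε hε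
    exact main ε hε
  have := le_of_tendsto hten hev
  simpa using this
end
end

section
/- In the inner-product-kernel setting on the sphere, for any x, y ∈ 𝒵 the geodesic distance in ℳ between φ(x) and φ(y) equals g′(1)^{1/2} arccos⟨x, y⟩, i.e. g′(1)^{1/2} times the geodesic (great-circle) distance in 𝒵 between x and y. -/
open Set
open scoped ENNReal BigOperators

noncomputable section

namespace GeoAux

open Filter
open scoped Topology

lemma partition_mono (P : PathPartition) : ∀ {j k : ℕ}, j ≤ k → k ≤ P.n → P.t j ≤ P.t k := by
  intro j k hjk hk
  induction k with
  | zero => simp_all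
  | succ m ih =>
    rcases Nat.eq_or_lt_of_le hjk with rfl | h
    · exact le_refl _
    · exact le_trans (ih (Nat.lt_succ_iff.mp h) (le_trans (Nat.le_succ m) hk))
        (P.mono m (Nat.lt_of_succ_le hk))

lemma partition_mem (P : PathPartition) {k : ℕ} (hk : k ≤ P.n) : P.t k ∈ Icc (0:ℝ) 1 := by
  constructor
  · rw [← P.first]; exact partition_mono P (Nat.zero_le k) hk
  · rw [← P.last]; exact partition_mono P hk le_rfl

lemma chiSum_le {E : Type*} [NormedAddCommGroup E] {γ : ℝ → E} {C : ℝ}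
    (h : ∀ s t : ℝ, s ∈ Icc (0:ℝ) 1 → t ∈ Icc (0:ℝ) 1 → s ≤ t → ‖γ t - γ s‖ ≤ C * (t - s))
    (P : PathPartition) : chiSum γ P ≤ C := by
  have hle : chiSum γ P ≤ ∑ k ∈ Finset.range P.n, (C * P.t (k+1) - C * P.t k) := by
    apply Finset.sum_le_sum
    intro k hk
    rw [Finset.mem_range] at hk
    have h1 := partition_mem P (Nat.le_of_lt hk)
    have h2 := partition_mem P (Nat.succ_le_of_lt hk)
    have := h (P.t k) (P.t (k+1)) h1 h2 (P.mono k hk)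
    linarith [this]
  rw [Finset.sum_range_sub (fun k => C * P.t k)] at hle
  simpa [P.first, P.last] using hle

lemma arccos_anti {s t : ℝ} (hs : -1 ≤ s) (hst : s ≤ t) (ht : t ≤ 1) :
    Real.arccos t ≤ Real.arccos s := by
  rcases eq_or_lt_of_le hst with rfl | h
  · exact le_refl _
  · exact le_of_lt (Real.strictAntiOn_arccos ⟨hs, le_trans hst ht⟩ ⟨le_trans hs hst, ht⟩ h)

lemma arccos_inner_triangle {F : Type*} [NormedAddCommGroup F] [InnerProductSpace ℝ F]
    {a b c : F} (ha : ‖a‖ = 1) (hb : ‖b‖ = 1) (hc : ‖c‖ = 1) :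
    Real.arccos (inner ℝ a c : ℝ) ≤ Real.arccos (inner ℝ a b : ℝ) + Real.arccos (inner ℝ b c : ℝ) := by
  set p : ℝ := inner ℝ a b with hp
  set q : ℝ := inner ℝ b c with hq
  set r : ℝ := inner ℝ a c with hr
  have hp1 : |p| ≤ 1 := by simpa [ha, hb] using abs_real_inner_le_norm a b
  have hq1 : |q| ≤ 1 := by simpa [hb, hc] using abs_real_inner_le_norm b c
  have hr1 : |r| ≤ 1 := by simpa [ha, hc] using abs_real_inner_le_norm a c
  rw [abs_le] at hp1 hq1 hr1
  set α := Real.arccos p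
  set β := Real.arccos q
  by_cases hsum : Real.pi ≤ α + β
  · exact le_trans (Real.arccos_le_pi r) hsum
  push_neg at hsum
  have hα0 : 0 ≤ α := Real.arccos_nonneg p
  have hβ0 : 0 ≤ β := Real.arccos_nonneg q
  have hbb : (inner ℝ b b : ℝ) = 1 := by
    simp [real_inner_self_eq_norm_sq, hb]
  have haa : (inner ℝ a a : ℝ) = 1 := by
    simp [real_inner_self_eq_norm_sq, ha]
  have hcc : (inner ℝ c c : ℝ) = 1 := by
    simp [real_inner_self_eq_norm_sq, hc]
  have hba : (inner ℝ b a : ℝ) = p := by rw [real_inner_comm]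
  have hcb : (inner ℝ c b : ℝ) = q := by rw [real_inner_comm]
  have key : p * q - Real.sqrt (1 - p^2) * Real.sqrt (1 - q^2) ≤ r := by
    set a' := a - p • b
    set c' := c - q • b
    have hac' : (inner ℝ a' c' : ℝ) = r - p * q := by
      simp only [a', c', inner_sub_left, inner_sub_right, real_inner_smul_left,
        real_inner_smul_right, hbb]
      ring
    have hna : ‖a'‖ = Real.sqrt (1 - p^2) := by
      have : ‖a'‖^2 = 1 - p^2 := by
        rw [← real_inner_self_eq_norm_sq]
        simp only [a', inner_sub_left, inner_sub_right, real_inner_smul_left,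
          real_inner_smul_right, hbb]
        rw [hba, haa]
        ring
      rw [← this, Real.sqrt_sq (norm_nonneg _)]
    have hnc : ‖c'‖ = Real.sqrt (1 - q^2) := by
      have : ‖c'‖^2 = 1 - q^2 := by
        rw [← real_inner_self_eq_norm_sq]
        simp only [c', inner_sub_left, inner_sub_right, real_inner_smul_left,
          real_inner_smul_right, hbb]
        rw [hcb, hcc]
        ring
      rw [← this, Real.sqrt_sq (norm_nonneg _)]
    have hCS : -(‖a'‖ * ‖c'‖) ≤ (inner ℝ a' c' : ℝ) :=
      neg_le_of_abs_le (abs_real_inner_le_norm a' c')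
    rw [hac', hna, hnc] at hCS
    linarith
  have hcos : Real.cos (α + β) ≤ r := by
    rw [Real.cos_add]
    rw [Real.cos_arccos hp1.1 hp1.2, Real.cos_arccos hq1.1 hq1.2,
      Real.sin_arccos, Real.sin_arccos]
    exact key
  calc Real.arccos r ≤ Real.arccos (Real.cos (α + β)) :=
        arccos_anti (Real.neg_one_le_cos _) hcos hr1.2
    _ = α + β := Real.arccos_cos (by linarith) (le_of_lt hsum)

lemma arccos_chain {F : Type*} [NormedAddCommGroup F] [InnerProductSpace ℝ F]
    (V : ℕ → F) (hV : ∀ k, ‖V k‖ = 1) (n : ℕ) :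
    Real.arccos (inner ℝ (V 0) (V n) : ℝ)
      ≤ ∑ k ∈ Finset.range n, Real.arccos (inner ℝ (V k) (V (k+1)) : ℝ) := by
  induction n with
  | zero =>
    simp only [Finset.range_zero, Finset.sum_empty]
    have h1 : (inner ℝ (V 0) (V 0) : ℝ) = 1 := by
      simp [real_inner_self_eq_norm_sq, hV 0]
    rw [h1, Real.arccos_one]
  | succ n ih =>
    rw [Finset.sum_range_succ]
    calc Real.arccos (inner ℝ (V 0) (V (n+1)) : ℝ)
        ≤ Real.arccos (inner ℝ (V 0) (V n) : ℝ) + Real.arccos (inner ℝ (V n) (V (n+1)) : ℝ) :=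
          arccos_inner_triangle (hV 0) (hV n) (hV (n+1))
      _ ≤ _ := by linarith [ih]

lemma one_sub_cos_eq (δ : ℝ) : 1 - Real.cos δ = 2 * Real.sin (δ/2)^2 := by
  have h1 := Real.cos_two_mul (δ/2)
  have h2 := Real.sin_sq_add_cos_sq (δ/2)
  have h3 : (2:ℝ) * (δ/2) = δ := by ring
  rw [h3] at h1
  nlinarith

lemma cos_ne_one_of_Ioo {δ : ℝ} (h1 : 0 < δ) (h2 : δ < Real.pi) : Real.cos δ ≠ 1 := by
  intro h
  have hπ := Real.pi_pos
  have := (Real.cos_eq_one_iff_of_lt_of_lt (by linarith) (by linarith)).mp h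
  linarith

lemma tendsto_chord_ratio (g : ℝ → ℝ) (hg : ContDiff ℝ 2 g) :
    Tendsto (fun δ : ℝ => 2 * (g 1 - g (Real.cos δ)) / δ^2) (𝓝[>] (0:ℝ))
      (𝓝 (deriv g 1)) := by
  have hdiff : HasDerivAt g (deriv g 1) 1 :=
    ((hg.differentiable (by norm_num)) 1).hasDerivAt
  have hslope : Tendsto (slope g 1) (𝓝[≠] (1:ℝ)) (𝓝 (deriv g 1)) :=
    hasDerivAt_iff_tendsto_slope.mp hdiff
  have hcos : Tendsto Real.cos (𝓝[>] (0:ℝ)) (𝓝[≠] (1:ℝ)) := by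
    rw [tendsto_nhdsWithin_iff]
    constructor
    · have := (Real.continuous_cos.tendsto 0).mono_left
        (nhdsWithin_le_nhds : 𝓝[>] (0:ℝ) ≤ 𝓝 0)
      simpa [Real.cos_zero] using this
    · filter_upwards [Ioo_mem_nhdsGT Real.pi_pos] with δ hδ
      exact cos_ne_one_of_Ioo hδ.1 hδ.2
  have factor1 := hslope.comp hcos
  have hsin : Tendsto (slope Real.sin 0) (𝓝[≠] (0:ℝ)) (𝓝 1) := by
    have := hasDerivAt_iff_tendsto_slope.mp (Real.hasDerivAt_sin 0)
    simpa [Real.cos_zero] using this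
  have half : Tendsto (fun δ : ℝ => δ/2) (𝓝[>] (0:ℝ)) (𝓝[≠] (0:ℝ)) := by
    rw [tendsto_nhdsWithin_iff]
    constructor
    · have : Tendsto (fun δ : ℝ => δ/2) (𝓝 (0:ℝ)) (𝓝 ((0:ℝ)/2)) :=
        (continuous_id.div_const 2).tendsto 0
      simpa using this.mono_left (nhdsWithin_le_nhds : 𝓝[>] (0:ℝ) ≤ 𝓝 0)
    · filter_upwards [self_mem_nhdsWithin] with δ hδ
      have : (0:ℝ) < δ := hδ
      simp only [mem_compl_iff, mem_singleton_iff]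
      positivity
  have factor2 := ((hsin.comp half).pow 2)
  have prod := factor1.mul factor2
  have heq : (fun δ : ℝ => (slope g 1 (Real.cos δ)) * (slope Real.sin 0 (δ/2))^2)
      =ᶠ[𝓝[>] (0:ℝ)] (fun δ : ℝ => 2 * (g 1 - g (Real.cos δ)) / δ^2) := by
    filter_upwards [Ioo_mem_nhdsGT Real.pi_pos] with δ hδ
    have hδ0 : δ ≠ 0 := ne_of_gt hδ.1
    have hc1 : Real.cos δ - 1 ≠ 0 := sub_ne_zero.mpr (cos_ne_one_of_Ioo hδ.1 hδ.2)
    have hsq : Real.sin (δ/2)^2 = (1 - Real.cos δ)/2 := by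
      have := one_sub_cos_eq δ; linarith
    simp only [slope_def_field, Real.sin_zero, sub_zero]
    rw [div_pow, hsq]
    field_simp
    ring
  have := (Tendsto.congr' heq prod)
  simpa using this

lemma chord_sq_bounds (g : ℝ → ℝ) (hg : ContDiff ℝ 2 g) {ε : ℝ} (hε : 0 < ε) :
    ∃ δ₀ : ℝ, 0 < δ₀ ∧ δ₀ ≤ Real.pi ∧ ∀ δ : ℝ, 0 ≤ δ → δ ≤ δ₀ →
      (deriv g 1 - ε) * δ^2 ≤ 2 * (g 1 - g (Real.cos δ)) ∧
      2 * (g 1 - g (Real.cos δ)) ≤ (deriv g 1 + ε) * δ^2 := by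
  have h := tendsto_chord_ratio g hg
  have hev : ∀ᶠ δ in 𝓝[>] (0:ℝ), |2*(g 1 - g (Real.cos δ))/δ^2 - deriv g 1| < ε := by
    have := Metric.tendsto_nhds.mp h ε hε
    simpa [Real.dist_eq] using this
  rw [eventually_nhdsWithin_iff, Metric.eventually_nhds_iff] at hev
  obtain ⟨r, hr, hball⟩ := hev
  refine ⟨min (r/2) Real.pi, lt_min (by linarith) Real.pi_pos, min_le_right _ _, ?_⟩
  intro δ h0 hδ
  rcases eq_or_lt_of_le h0 with rfl | hpos
  · constructor <;> simp [Real.cos_zero]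
  · have hdr : dist δ 0 < r := by
      rw [Real.dist_eq, sub_zero, abs_of_pos hpos]
      calc δ ≤ min (r/2) Real.pi := hδ
        _ ≤ r/2 := min_le_left _ _
        _ < r := by linarith
    have hmem : δ ∈ Ioi (0:ℝ) := mem_Ioi.mpr hpos
    have habs := hball hdr hmem
    rw [abs_lt] at habs
    have hδ2 : (0:ℝ) < δ^2 := by positivity
    have h1 : (deriv g 1 - ε) < 2*(g 1 - g (Real.cos δ))/δ^2 := by linarith [habs.1]
    have h2 : 2*(g 1 - g (Real.cos δ))/δ^2 < (deriv g 1 + ε) := by linarith [habs.2]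
    exact ⟨le_of_lt ((lt_div_iff₀ hδ2).mp h1), le_of_lt ((div_lt_iff₀ hδ2).mp h2)⟩

lemma exists_unit_pair {d : ℕ} (hd : 2 ≤ d) (c : ℝ) (hc : -1 ≤ c) (hc' : c ≤ 1) :
    ∃ u v : EuclideanSpace ℝ (Fin d), ‖u‖ = 1 ∧ ‖v‖ = 1 ∧ (inner ℝ u v : ℝ) = c := by
  set i0 : Fin d := ⟨0, by omega⟩
  set i1 : Fin d := ⟨1, by omega⟩
  have h01 : i0 ≠ i1 := by simp [i0, i1, Fin.ext_iff]
  set s : ℝ := Real.sqrt (1 - c^2)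
  have hs : s^2 = 1 - c^2 := Real.sq_sqrt (by nlinarith)
  set u : EuclideanSpace ℝ (Fin d) := EuclideanSpace.single i0 1
  set v : EuclideanSpace ℝ (Fin d) :=
    EuclideanSpace.single i0 c + EuclideanSpace.single i1 s
  have hsingle : ∀ (a b : ℝ) (i j : Fin d),
      (inner ℝ (EuclideanSpace.single i a) (EuclideanSpace.single j b) : ℝ)
        = if i = j then a * b else 0 := by
    intro a b i j
    rw [EuclideanSpace.inner_single_left]
    by_cases h : i = j
    · subst h; simp [EuclideanSpace.single_apply]
    · simp [EuclideanSpace.single_apply, h, Ne.symm h]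
  have huv : (inner ℝ u v : ℝ) = c := by
    simp only [u, v, inner_add_right, hsingle]
    simp [h01]
  have hu : ‖u‖ = 1 := by
    simp [u, EuclideanSpace.norm_single]
  have hvv : (inner ℝ v v : ℝ) = 1 := by
    simp only [v, inner_add_right, inner_add_left, hsingle]
    simp only [if_true, eq_self_iff_true, if_neg h01, if_neg (Ne.symm h01)]
    nlinarith
  have hv : ‖v‖ = 1 := by
    have h2 : ‖v‖^2 = 1 := by rw [← real_inner_self_eq_norm_sq]; exact hvv
    nlinarith [norm_nonneg v]
  exact ⟨u, v, hu, hv, huv⟩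

end GeoAux

open Filter
open scoped Topology

set_option maxHeartbeats 2000000 in
/-- Proposition 2. Inner-product kernels on the unit sphere: for
`x, y ∈ 𝒵`, geodesic distance in `ℳ` between `φ(x)` and `φ(y)` equals
`g′(1)^{1/2} arccos⟨x, y⟩`. -/
theorem inner_product_kernel_geodesic_distance
    {d : ℕ} (hd : 2 ≤ d)
    (g : ℝ → ℝ) (hg : ContDiff ℝ 2 g)
    (hg1 : 0 < deriv g 1) (hg2 : 0 ≤ deriv (deriv g) 1)
    (φ : EuclideanSpace ℝ (Fin d) → l2)
    (hφ : ∀ x ∈ Metric.sphere (0 : EuclideanSpace ℝ (Fin d)) 1,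
      ∀ y ∈ Metric.sphere (0 : EuclideanSpace ℝ (Fin d)) 1,
        (inner ℝ (φ x) (φ y) : ℝ) = g (inner ℝ x y : ℝ))
    -- Assumption 1
    (hA1 : ∀ x ∈ Metric.sphere (0 : EuclideanSpace ℝ (Fin d)) 1,
      ∀ y ∈ Metric.sphere (0 : EuclideanSpace ℝ (Fin d)) 1, x ≠ y →
        ∃ a ∈ Metric.sphere (0 : EuclideanSpace ℝ (Fin d)) 1,
          g (inner ℝ x a : ℝ) ≠ g (inner ℝ y a : ℝ))
    (x : EuclideanSpace ℝ (Fin d)) (hx : x ∈ Metric.sphere (0 : EuclideanSpace ℝ (Fin d)) 1)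
    (y : EuclideanSpace ℝ (Fin d)) (hy : y ∈ Metric.sphere (0 : EuclideanSpace ℝ (Fin d)) 1) :
    geodesicDist (φ '' Metric.sphere (0 : EuclideanSpace ℝ (Fin d)) 1) (φ x) (φ y) =
      ENNReal.ofReal (Real.sqrt (deriv g 1) * Real.arccos (inner ℝ x y : ℝ)) := by
  classical
  set Z := Metric.sphere (0 : EuclideanSpace ℝ (Fin d)) 1 with hZdef
  set L := deriv g 1 with hLdef
  set θ := Real.arccos (inner ℝ x y : ℝ) with hθdef
  have hθ0 : 0 ≤ θ := Real.arccos_nonneg _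
  have hθπ : θ ≤ Real.pi := Real.arccos_le_pi _
  have hunit : ∀ u ∈ Z, ‖u‖ = 1 := fun u hu => mem_sphere_zero_iff_norm.mp hu
  have hinner_self : ∀ u ∈ Z, (inner ℝ u u : ℝ) = 1 := by
    intro u hu
    rw [real_inner_self_eq_norm_sq, hunit u hu, one_pow]
  have hrange : ∀ u ∈ Z, ∀ v ∈ Z, -1 ≤ (inner ℝ u v : ℝ) ∧ (inner ℝ u v : ℝ) ≤ 1 := by
    intro u hu v hv
    have h := abs_real_inner_le_norm u v
    rw [hunit u hu, hunit v hv] at h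
    rw [abs_le] at h
    simpa using h
  have hnormφ : ∀ u ∈ Z, ∀ v ∈ Z, ‖φ u - φ v‖^2 = 2*(g 1 - g (inner ℝ u v : ℝ)) := by
    intro u hu v hv
    rw [@norm_sub_sq_real l2 _ _]
    have h1 : ‖φ u‖^2 = g 1 := by
      rw [← real_inner_self_eq_norm_sq, hφ u hu u hu, hinner_self u hu]
    have h2 : ‖φ v‖^2 = g 1 := by
      rw [← real_inner_self_eq_norm_sq, hφ v hv v hv, hinner_self v hv]
    rw [h1, h2, hφ u hu v hv]
    ring
  have hφinj : ∀ u ∈ Z, ∀ v ∈ Z, φ u = φ v → u = v := by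
    intro u hu v hv he
    by_contra hne
    obtain ⟨a, ha, hga⟩ := hA1 u hu v hv hne
    exact hga (by rw [← hφ u hu a ha, ← hφ v hv a ha, he])
  have hgap : ∀ c : ℝ, -1 ≤ c → c < 1 → g c < g 1 := by
    intro c h1 h2
    obtain ⟨u, v, hu, hv, huv⟩ := GeoAux.exists_unit_pair hd c h1 (le_of_lt h2)
    have huZ : u ∈ Z := mem_sphere_zero_iff_norm.mpr hu
    have hvZ : v ∈ Z := mem_sphere_zero_iff_norm.mpr hv
    have hne : u ≠ v := by
      intro he
      rw [he, hinner_self v hvZ] at huv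
      linarith
    have hnn : (0:ℝ) ≤ ‖φ u - φ v‖^2 := sq_nonneg _
    rw [hnormφ u huZ v hvZ, huv] at hnn
    rcases lt_or_eq_of_le (by linarith : g c ≤ g 1) with h | h
    · exact h
    · exfalso
      have hz : ‖φ u - φ v‖^2 = 0 := by
        rw [hnormφ u huZ v hvZ, huv, h]; ring
      have hz2 : φ u = φ v := by
        have := (pow_eq_zero_iff (n := 2) (by norm_num)).mp hz
        exact sub_eq_zero.mp (norm_eq_zero.mp this)
      exact hne (hφinj u huZ v hvZ hz2)
  -- great circle construction
  have hxy : -1 ≤ (inner ℝ x y : ℝ) ∧ (inner ℝ x y : ℝ) ≤ 1 := hrange x hx y hy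
  have hcosθ : Real.cos θ = (inner ℝ x y : ℝ) := Real.cos_arccos hxy.1 hxy.2
  obtain ⟨w, hw1, hxw, hyw⟩ : ∃ w : EuclideanSpace ℝ (Fin d), ‖w‖ = 1 ∧
      (inner ℝ x w : ℝ) = 0 ∧ y = Real.cos θ • x + Real.sin θ • w := by
    obtain ⟨w₀, hw₀1, hxw₀⟩ : ∃ w₀ : EuclideanSpace ℝ (Fin d), ‖w₀‖ = 1 ∧ (inner ℝ x w₀ : ℝ) = 0 := by
      set i0 : Fin d := ⟨0, by omega⟩
      set i1 : Fin d := ⟨1, by omega⟩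
      have h01 : i0 ≠ i1 := by simp [i0, i1, Fin.ext_iff]
      set e0 : EuclideanSpace ℝ (Fin d) := EuclideanSpace.single i0 1
      set e1 : EuclideanSpace ℝ (Fin d) := EuclideanSpace.single i1 1
      have he0 : ‖e0‖ = 1 := by simp [e0, EuclideanSpace.norm_single]
      have he1 : ‖e1‖ = 1 := by simp [e1, EuclideanSpace.norm_single]
      have he01 : (inner ℝ e0 e1 : ℝ) = 0 := by
        rw [EuclideanSpace.inner_single_left]
        simp [e1, EuclideanSpace.single_apply, h01]
      have he11 : (inner ℝ e1 e1 : ℝ) = 1 := by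
        rw [real_inner_self_eq_norm_sq, he1, one_pow]
      by_cases h : (inner ℝ x e0 : ℝ) = 0
      · exact ⟨e0, he0, h⟩
      · set w' : EuclideanSpace ℝ (Fin d) :=
          (inner ℝ x e1 : ℝ) • e0 - (inner ℝ x e0 : ℝ) • e1 with hw'def
        have hxw' : (inner ℝ x w' : ℝ) = 0 := by
          simp only [hw'def, inner_sub_right, real_inner_smul_right]
          ring
        have hw'ne : w' ≠ 0 := by
          intro h0
          have hz : (inner ℝ w' e1 : ℝ) = 0 := by rw [h0]; exact inner_zero_left e1
          rw [hw'def] at hz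
          simp only [inner_sub_left, real_inner_smul_left, he01, he11] at hz
          apply h
          linarith
        refine ⟨‖w'‖⁻¹ • w', norm_smul_inv_norm hw'ne, ?_⟩
        rw [real_inner_smul_right, hxw', mul_zero]
    have hsin0 : 0 ≤ Real.sin θ := Real.sin_nonneg_of_nonneg_of_le_pi hθ0 hθπ
    rcases eq_or_lt_of_le hsin0 with hs0 | hspos
    · have hθcase : θ = 0 ∨ θ = Real.pi := by
        by_contra hcon
        push_neg at hcon
        have h1 : 0 < θ := lt_of_le_of_ne hθ0 (Ne.symm hcon.1)
        have h2 : θ < Real.pi := lt_of_le_of_ne hθπ hcon.2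
        exact absurd hs0.symm (ne_of_gt (Real.sin_pos_of_pos_of_lt_pi h1 h2))
      rcases hθcase with h | h
      · have hxy1 : (inner ℝ x y : ℝ) = 1 := by rw [← hcosθ, h, Real.cos_zero]
        have hyx : y = x := by
          have hns : ‖x - y‖^2 = 0 := by
            rw [@norm_sub_sq_real (EuclideanSpace ℝ (Fin d)) _ _,
              hunit x hx, hunit y hy, hxy1]
            norm_num
          have h6 := (pow_eq_zero_iff (n := 2) (by norm_num)).mp hns
          exact (sub_eq_zero.mp (norm_eq_zero.mp h6)).symm
        refine ⟨w₀, hw₀1, hxw₀, ?_⟩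
        rw [h]
        simp [hyx]
      · have hxy1 : (inner ℝ x y : ℝ) = -1 := by rw [← hcosθ, h, Real.cos_pi]
        have hyx : y = -x := by
          have hns : ‖x + y‖^2 = 0 := by
            rw [@norm_add_sq_real (EuclideanSpace ℝ (Fin d)) _ _,
              hunit x hx, hunit y hy, hxy1]
            norm_num
          have h6 := (pow_eq_zero_iff (n := 2) (by norm_num)).mp hns
          have h7 := norm_eq_zero.mp h6
          exact eq_neg_of_add_eq_zero_right h7
        refine ⟨w₀, hw₀1, hxw₀, ?_⟩
        rw [h]
        simp [hyx, Real.cos_pi, Real.sin_pi]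
    · have hsne : Real.sin θ ≠ 0 := ne_of_gt hspos
      refine ⟨(Real.sin θ)⁻¹ • (y - Real.cos θ • x), ?_, ?_, ?_⟩
      · have hin : (inner ℝ (y - Real.cos θ • x) (y - Real.cos θ • x) : ℝ) = (Real.sin θ)^2 := by
          have hyx2 : (inner ℝ y x : ℝ) = Real.cos θ := by
            rw [real_inner_comm]; exact hcosθ.symm
          simp only [inner_sub_left, inner_sub_right, real_inner_smul_left, real_inner_smul_right]
          rw [hinner_self y hy, hinner_self x hx, hyx2]
          have := Real.sin_sq_add_cos_sq θ
          nlinarith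
        have hnn : ‖y - Real.cos θ • x‖ = Real.sin θ := by
          have h8 : ‖y - Real.cos θ • x‖^2 = (Real.sin θ)^2 := by
            rw [← real_inner_self_eq_norm_sq]; exact hin
          nlinarith [norm_nonneg (y - Real.cos θ • x), hspos]
        rw [norm_smul, hnn, norm_inv, Real.norm_eq_abs, abs_of_pos hspos]
        field_simp
      · rw [real_inner_smul_right]
        simp only [inner_sub_right, real_inner_smul_right]
        rw [hinner_self x hx, ← hcosθ]
        ring
      · rw [smul_inv_smul₀ hsne]
        abel
  set cc : ℝ → EuclideanSpace ℝ (Fin d) :=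
    fun t => Real.cos (t*θ) • x + Real.sin (t*θ) • w with hccdef
  have hwx : (inner ℝ w x : ℝ) = 0 := by rw [real_inner_comm]; exact hxw
  have hww : (inner ℝ w w : ℝ) = 1 := by rw [real_inner_self_eq_norm_sq, hw1, one_pow]
  have hcirc : ∀ a b : ℝ, (inner ℝ (cc a) (cc b) : ℝ) = Real.cos ((b - a)*θ) := by
    intro a b
    simp only [hccdef, inner_add_left, inner_add_right, real_inner_smul_left,
      real_inner_smul_right]
    rw [hinner_self x hx, hxw, hwx, hww]
    have h1 : (b - a)*θ = b*θ - a*θ := by ring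
    rw [h1, Real.cos_sub]
    ring
  have hccZ : ∀ t : ℝ, cc t ∈ Z := by
    intro t
    have h1 : (inner ℝ (cc t) (cc t) : ℝ) = 1 := by
      rw [hcirc t t]
      simp
    rw [hZdef, mem_sphere_zero_iff_norm]
    have h2 : ‖cc t‖^2 = 1 := by rw [← real_inner_self_eq_norm_sq]; exact h1
    nlinarith [norm_nonneg (cc t)]
  have hc0 : cc 0 = x := by
    show Real.cos (0*θ) • x + Real.sin (0*θ) • w = x
    simp
  have hc1 : cc 1 = y := by
    show Real.cos (1*θ) • x + Real.sin (1*θ) • w = y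
    simp only [one_mul]
    exact hyw.symm
  set γup : ℝ → l2 := fun t => φ (cc t) with hγdef
  have hγnorm : ∀ a b : ℝ, ‖γup b - γup a‖
      = Real.sqrt (2*(g 1 - g (Real.cos ((b - a)*θ)))) := by
    intro a b
    have h1 : ‖γup b - γup a‖^2 = 2*(g 1 - g (Real.cos ((b-a)*θ))) := by
      show ‖φ (cc b) - φ (cc a)‖^2 = _
      rw [hnormφ (cc b) (hccZ b) (cc a) (hccZ a), hcirc b a]
      have h2 : (a - b)*θ = -((b - a)*θ) := by ring
      rw [h2, Real.cos_neg]
    rw [← Real.sqrt_sq (norm_nonneg (γup b - γup a)), h1]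
  have hγcont : Continuous γup := by
    rw [continuous_iff_continuousAt]
    intro s
    rw [ContinuousAt, tendsto_iff_dist_tendsto_zero]
    have hEq : (fun t => dist (γup t) (γup s))
        = fun t => Real.sqrt (2*(g 1 - g (Real.cos ((t - s)*θ)))) := by
      funext t
      rw [dist_eq_norm, hγnorm s t]
    rw [hEq]
    have hcont2 : Continuous fun t : ℝ => Real.sqrt (2*(g 1 - g (Real.cos ((t - s)*θ)))) := by
      apply Real.continuous_sqrt.comp
      apply continuous_const.mul
      apply continuous_const.sub
      exact hg.continuous.comp (Real.continuous_cos.comp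
        ((continuous_id.sub continuous_const).mul continuous_const))
    have h0 : Real.sqrt (2*(g 1 - g (Real.cos ((s - s)*θ)))) = 0 := by
      simp
    have h3 := hcont2.tendsto s
    rw [h0] at h3
    exact h3
  have hupper : ∀ ε : ℝ, 0 < ε → ∀ s t : ℝ, s ≤ t →
      ‖γup t - γup s‖ ≤ (Real.sqrt (L + ε) * θ) * (t - s) := by
    intro ε hε s t hst
    obtain ⟨δ₀, hδ₀, hδπ, hbound⟩ := GeoAux.chord_sq_bounds g hg hε
    obtain ⟨n', hn'⟩ := exists_nat_ge ((t - s) * θ / δ₀)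
    set n : ℕ := n' + 1 with hndef
    have hn0 : (0:ℝ) < n := by exact_mod_cast Nat.succ_pos n'
    have hnne : (n:ℝ) ≠ 0 := ne_of_gt hn0
    set h := (t - s)/(n:ℝ) with hhdef
    have hts : 0 ≤ t - s := by linarith
    have hh0 : 0 ≤ h := div_nonneg hts hn0.le
    have hhθ0 : 0 ≤ h*θ := mul_nonneg hh0 hθ0
    have hhθδ : h*θ ≤ δ₀ := by
      have h2 : (t - s)*θ/δ₀ ≤ (n:ℝ) := le_trans hn' (by exact_mod_cast Nat.le_succ n')
      have h1 : (t - s)*θ ≤ δ₀ * n := by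
        calc (t-s)*θ = ((t-s)*θ/δ₀)*δ₀ := by field_simp
          _ ≤ (n:ℝ)*δ₀ := by nlinarith [hδ₀]
          _ = δ₀*n := by ring
      rw [hhdef, div_mul_eq_mul_div, div_le_iff₀ hn0]
      linarith
    have key : ∀ j : ℕ, ‖γup (s + ((j:ℝ)+1)*h) - γup (s + (j:ℝ)*h)‖
        ≤ Real.sqrt (L+ε) * (h*θ) := by
      intro j
      rw [hγnorm]
      have harg : (s + ((j:ℝ)+1)*h) - (s + (j:ℝ)*h) = h := by ring
      rw [harg]
      have hb := (hbound (h*θ) hhθ0 hhθδ).2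
      calc Real.sqrt (2*(g 1 - g (Real.cos (h*θ)))) ≤ Real.sqrt ((L+ε)*(h*θ)^2) :=
            Real.sqrt_le_sqrt hb
        _ = Real.sqrt (L+ε) * (h*θ) := by
            rw [Real.sqrt_mul (by linarith : (0:ℝ) ≤ L+ε), Real.sqrt_sq hhθ0]
    have tele := dist_le_range_sum_dist (fun j : ℕ => γup (s + (j:ℝ)*h)) n
    simp only [Nat.cast_zero, zero_mul, add_zero] at tele
    have hen : s + (n:ℝ)*h = t := by
      rw [hhdef, mul_div_assoc']
      field_simp
      ring
    rw [hen] at tele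
    calc ‖γup t - γup s‖ = dist (γup s) (γup t) := by
          rw [dist_eq_norm, norm_sub_rev]
      _ ≤ ∑ j ∈ Finset.range n, dist (γup (s + (j:ℝ)*h)) (γup (s + ((j+1:ℕ):ℝ)*h)) := tele
      _ ≤ ∑ j ∈ Finset.range n, Real.sqrt (L+ε) * (h*θ) := by
          apply Finset.sum_le_sum
          intro j _
          rw [dist_eq_norm, norm_sub_rev]
          have hkey := key j
          push_cast
          push_cast at hkey
          exact hkey
      _ = n * (Real.sqrt (L+ε) * (h*θ)) := by
          rw [Finset.sum_const, Finset.card_range, nsmul_eq_mul]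
      _ = (Real.sqrt (L+ε) * θ) * (t - s) := by
          rw [hhdef]
          field_simp
  have hpath : IsPathIn (φ '' Z) (φ x) (φ y) γup := by
    refine ⟨hγcont.continuousOn, ?_, ?_, ?_⟩
    · intro t _
      exact mem_image_of_mem φ (hccZ t)
    · show φ (cc 0) = φ x
      rw [hc0]
    · show φ (cc 1) = φ y
      rw [hc1]
  have hub : geodesicDist (φ '' Z) (φ x) (φ y) ≤ ENNReal.ofReal (Real.sqrt L * θ) := by
    refine le_trans (iInf_le _ ⟨γup, hpath⟩) ?_
    apply iSup_le
    intro P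
    apply ENNReal.ofReal_le_ofReal
    have hεbound : ∀ ε : ℝ, 0 < ε → chiSum γup P ≤ Real.sqrt (L + ε) * θ := by
      intro ε hε
      exact GeoAux.chiSum_le (fun s t hs ht hst => hupper ε hε s t hst) P
    have htend : Tendsto (fun ε : ℝ => Real.sqrt (L + ε) * θ) (𝓝[>] 0)
        (𝓝 (Real.sqrt L * θ)) := by
      have hcont3 : Continuous fun ε : ℝ => Real.sqrt (L + ε) * θ :=
        ((Real.continuous_sqrt.comp (continuous_const.add continuous_id)).mul continuous_const)
      have h4 := hcont3.tendsto 0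
      simp only [add_zero] at h4
      exact h4.mono_left nhdsWithin_le_nhds
    apply ge_of_tendsto htend
    filter_upwards [self_mem_nhdsWithin] with ε hε
    exact hεbound ε hε
  have hlb : ∀ γ : ℝ → l2, IsPathIn (φ '' Z) (φ x) (φ y) γ →
      ENNReal.ofReal (Real.sqrt L * θ) ≤ pathLength γ := by
    intro γ hγ
    obtain ⟨hγc, hγmem, hγ0, hγ1⟩ := hγ
    have hcore : ∀ ε : ℝ, 0 < ε → ε < L →
        ENNReal.ofReal (Real.sqrt (L - ε) * θ) ≤ pathLength γ := by
      intro ε hε hεL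
      obtain ⟨δ₀, hδ₀, hδπ, hbound⟩ := GeoAux.chord_sq_bounds g hg hε
      have hIcc : (Icc (-1:ℝ) (Real.cos δ₀)).Nonempty :=
        nonempty_Icc.mpr (Real.neg_one_le_cos δ₀)
      obtain ⟨c₀, hc₀mem, hc₀max⟩ :=
        isCompact_Icc.exists_isMaxOn hIcc (hg.continuous.continuousOn)
      have hcosδ₀lt : Real.cos δ₀ < 1 := by
        have := Real.cos_lt_cos_of_nonneg_of_le_pi (le_refl 0) hδπ hδ₀
        simpa [Real.cos_zero] using this
      have hm : 0 < g 1 - g c₀ :=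
        sub_pos.mpr (hgap c₀ hc₀mem.1 (lt_of_le_of_lt hc₀mem.2 hcosδ₀lt))
      set m := g 1 - g c₀ with hmdef
      have huc := isCompact_Icc.uniformContinuousOn_of_continuous hγc
      rw [Metric.uniformContinuousOn_iff] at huc
      obtain ⟨δ, hδpos, hδuc⟩ := huc (Real.sqrt (2*m)) (Real.sqrt_pos.mpr (by linarith))
      obtain ⟨n', hn'⟩ := exists_nat_one_div_lt hδpos
      set N : ℕ := n' + 1 with hNdef
      have hN0 : (0:ℝ) < N := by exact_mod_cast Nat.succ_pos n'
      have hNne : (N:ℝ) ≠ 0 := ne_of_gt hN0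
      have h1N : 1/(N:ℝ) < δ := by
        have hcast : ((N:ℕ):ℝ) = (n':ℝ) + 1 := by rw [hNdef, Nat.cast_add, Nat.cast_one]
        rw [hcast]
        exact hn'
      have Pmono : ∀ k : ℕ, k < N → ((k:ℝ)/(N:ℝ)) ≤ (((k+1:ℕ):ℝ)/(N:ℝ)) := by
        intro k _
        have hkk : ((k:ℝ)) ≤ ((k+1:ℕ):ℝ) := by push_cast; linarith
        gcongr
      have Pfirst : ((0:ℕ):ℝ)/(N:ℝ) = 0 := by simp
      have Plast : ((N:ℕ):ℝ)/(N:ℝ) = 1 := div_self hNne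
      set P : PathPartition := ⟨N, fun k => (k:ℝ)/(N:ℝ), Pfirst, Plast, Pmono⟩ with hPdef
      have hsel : ∀ k : ℕ, ∃ u, u ∈ Z ∧ (k ≤ N → φ u = γ ((k:ℝ)/(N:ℝ))) := by
        intro k
        by_cases hk : k ≤ N
        · have hmem : (k:ℝ)/(N:ℝ) ∈ Icc (0:ℝ) 1 := by
            constructor
            · positivity
            · rw [div_le_one hN0]; exact_mod_cast hk
          obtain ⟨u, hu, hφu⟩ := hγmem _ hmem
          exact ⟨u, hu, fun _ => hφu⟩
        · exact ⟨x, hx, fun hk2 => absurd hk2 hk⟩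
      choose U hUZ hUφ using hsel
      have hU0 : U 0 = x := by
        apply hφinj _ (hUZ 0) _ hx
        have h00 : ((0:ℕ):ℝ)/(N:ℝ) = 0 := by simp
        rw [hUφ 0 (Nat.zero_le N), h00, hγ0]
      have hUN : U N = y := by
        apply hφinj _ (hUZ N) _ hy
        rw [hUφ N le_rfl, Plast, hγ1]
      have hterm : ∀ k, k < N →
          Real.sqrt (L - ε) * Real.arccos (inner ℝ (U k) (U (k+1)) : ℝ)
            ≤ ‖γ (((k+1:ℕ):ℝ)/(N:ℝ)) - γ ((k:ℝ)/(N:ℝ))‖ := by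
        intro k hk
        have hk1 : k + 1 ≤ N := hk
        have hkN : k ≤ N := le_of_lt hk
        have hγk := hUφ k hkN
        have hγk1 := hUφ (k+1) hk1
        have hin := hrange (U (k+1)) (hUZ (k+1)) (U k) (hUZ k)
        have hnormid : ‖γ (((k+1:ℕ):ℝ)/(N:ℝ)) - γ ((k:ℝ)/(N:ℝ))‖^2
            = 2*(g 1 - g (inner ℝ (U (k+1)) (U k) : ℝ)) := by
          rw [← hγk, ← hγk1]
          exact hnormφ (U (k+1)) (hUZ (k+1)) (U k) (hUZ k)
        have hmem1 : (k:ℝ)/(N:ℝ) ∈ Icc (0:ℝ) 1 :=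
          ⟨by positivity, by rw [div_le_one hN0]; exact_mod_cast hkN⟩
        have hmem2 : ((k+1:ℕ):ℝ)/(N:ℝ) ∈ Icc (0:ℝ) 1 :=
          ⟨by positivity, by rw [div_le_one hN0]; exact_mod_cast hk1⟩
        have hdsmall : dist (γ ((k:ℝ)/(N:ℝ))) (γ (((k+1:ℕ):ℝ)/(N:ℝ))) < Real.sqrt (2*m) := by
          apply hδuc _ hmem1 _ hmem2
          rw [Real.dist_eq]
          have hdiff : (k:ℝ)/(N:ℝ) - ((k+1:ℕ):ℝ)/(N:ℝ) = -(1/(N:ℝ)) := by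
            push_cast
            field_simp
            ring
          rw [hdiff, abs_neg, abs_of_pos (by positivity)]
          exact h1N
        have hsq : ‖γ (((k+1:ℕ):ℝ)/(N:ℝ)) - γ ((k:ℝ)/(N:ℝ))‖^2 < 2*m := by
          have h5 : ‖γ (((k+1:ℕ):ℝ)/(N:ℝ)) - γ ((k:ℝ)/(N:ℝ))‖ < Real.sqrt (2*m) := by
            rw [← dist_eq_norm, dist_comm]
            exact hdsmall
          nlinarith [norm_nonneg (γ (((k+1:ℕ):ℝ)/(N:ℝ)) - γ ((k:ℝ)/(N:ℝ))),
            Real.sq_sqrt (by linarith : (0:ℝ) ≤ 2*m), Real.sqrt_nonneg (2*m)]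
        have hbig : Real.cos δ₀ < (inner ℝ (U (k+1)) (U k) : ℝ) := by
          by_contra hc
          push_neg at hc
          have h9 : g (inner ℝ (U (k+1)) (U k) : ℝ) ≤ g c₀ := hc₀max ⟨hin.1, hc⟩
          rw [hnormid] at hsq
          rw [hmdef] at hsq
          linarith
        set α := Real.arccos (inner ℝ (U (k+1)) (U k) : ℝ) with hαdef
        have hα0 : 0 ≤ α := Real.arccos_nonneg _
        have hαδ : α ≤ δ₀ := by
          have h10 := GeoAux.arccos_anti (Real.neg_one_le_cos δ₀) (le_of_lt hbig) hin.2
          rwa [Real.arccos_cos hδ₀.le hδπ] at h10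
        have hcosα : Real.cos α = (inner ℝ (U (k+1)) (U k) : ℝ) := Real.cos_arccos hin.1 hin.2
        have hlow := (hbound α hα0 hαδ).1
        rw [hcosα] at hlow
        have hswap : Real.arccos (inner ℝ (U k) (U (k+1)) : ℝ) = α := by
          rw [hαdef, real_inner_comm]
        rw [hswap]
        have h6 : (Real.sqrt (L-ε) * α)^2 ≤ ‖γ (((k+1:ℕ):ℝ)/(N:ℝ)) - γ ((k:ℝ)/(N:ℝ))‖^2 := by
          rw [hnormid, mul_pow, Real.sq_sqrt (by linarith : (0:ℝ) ≤ L - ε)]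
          linarith
        have h7 : 0 ≤ Real.sqrt (L-ε) * α := mul_nonneg (Real.sqrt_nonneg _) hα0
        nlinarith [norm_nonneg (γ (((k+1:ℕ):ℝ)/(N:ℝ)) - γ ((k:ℝ)/(N:ℝ)))]
      have hchain := GeoAux.arccos_chain U (fun k => hunit _ (hUZ k)) N
      have hθle : θ ≤ ∑ k ∈ Finset.range N, Real.arccos (inner ℝ (U k) (U (k+1)) : ℝ) := by
        have h11 : θ = Real.arccos (inner ℝ (U 0) (U N) : ℝ) := by rw [hU0, hUN]
        rw [h11]
        exact hchain
      have hsum : Real.sqrt (L - ε) * θ ≤ chiSum γ P := by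
        calc Real.sqrt (L-ε) * θ
            ≤ Real.sqrt (L-ε) * ∑ k ∈ Finset.range N,
                Real.arccos (inner ℝ (U k) (U (k+1)) : ℝ) :=
              mul_le_mul_of_nonneg_left hθle (Real.sqrt_nonneg _)
          _ = ∑ k ∈ Finset.range N,
                Real.sqrt (L-ε) * Real.arccos (inner ℝ (U k) (U (k+1)) : ℝ) := by
              rw [Finset.mul_sum]
          _ ≤ ∑ k ∈ Finset.range N, ‖γ (P.t (k+1)) - γ (P.t k)‖ := by
              apply Finset.sum_le_sum
              intro k hk
              rw [Finset.mem_range] at hk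
              exact hterm k hk
          _ = chiSum γ P := rfl
      calc ENNReal.ofReal (Real.sqrt (L-ε)*θ) ≤ ENNReal.ofReal (chiSum γ P) :=
            ENNReal.ofReal_le_ofReal hsum
        _ ≤ pathLength γ := le_iSup (fun Q => ENNReal.ofReal (chiSum γ Q)) P
    have htend2 : Tendsto (fun ε : ℝ => ENNReal.ofReal (Real.sqrt (L - ε) * θ)) (𝓝[>] 0)
        (𝓝 (ENNReal.ofReal (Real.sqrt L * θ))) := by
      apply (ENNReal.continuous_ofReal.tendsto _).comp
      have hcont4 : Continuous fun ε : ℝ => Real.sqrt (L - ε) * θ :=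
        ((Real.continuous_sqrt.comp (continuous_const.sub continuous_id)).mul continuous_const)
      have h8 := hcont4.tendsto 0
      simp only [sub_zero] at h8
      exact h8.mono_left nhdsWithin_le_nhds
    apply le_of_tendsto htend2
    filter_upwards [Ioo_mem_nhdsGT hg1] with ε hε
    exact hcore ε hε.1 hε.2
  exact le_antisymm hub (le_iInf (fun γ => hlb γ.val γ.property))
end
end

section
/- In the additive-kernel setting, for any a, b ∈ ℳ and any path γ in ℳ with end-points a, b one has l(γ) ≥ ‖ψ(φ⁻¹(b)) − ψ(φ⁻¹(a))‖. -/
open Set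
open scoped ENNReal BigOperators

noncomputable section

/-- The mixed second partial derivative `∂²F/∂x∂y` evaluated at `(z, z)`. -/
def mixedPartial (F : ℝ → ℝ → ℝ) (z : ℝ) : ℝ :=
  deriv (fun y : ℝ => deriv (fun x : ℝ => F x y) z) z

/-- The coordinatewise monotone transformation
`ψ_i(x^{(i)}) = α_i^{1/2} ∫_{c_i⁻}^{x^{(i)}} (∂²f_i/∂x∂y |_{(ξ,ξ)})^{1/2} dξ`. -/
def psiMap {d : ℕ} (α : Fin d → ℝ) (fi : Fin d → ℝ → ℝ → ℝ) (cl : Fin d → ℝ)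
    (x : EuclideanSpace ℝ (Fin d)) : EuclideanSpace ℝ (Fin d) :=
  WithLp.toLp 2 (fun i => Real.sqrt (α i) * ∫ ξ in (cl i)..(x i), Real.sqrt (mixedPartial (fi i) ξ))


/-! ### Auxiliary calculus lemmas -/

/-- Partial derivative in the first variable, as a function on pairs. -/
def P1 (F : ℝ → ℝ → ℝ) : ℝ × ℝ → ℝ := fun p => fderiv ℝ (fun q : ℝ × ℝ => F q.1 q.2) p (1, 0)

/-- Mixed second partial derivative, as a function on pairs. -/
def P12 (F : ℝ → ℝ → ℝ) : ℝ × ℝ → ℝ := fun p => fderiv ℝ (P1 F) p (0, 1)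

variable {F : ℝ → ℝ → ℝ}
variable (hF : ContDiff ℝ 2 (fun p : ℝ × ℝ => F p.1 p.2))
include hF

theorem hasDerivAt_P1 (u v : ℝ) : HasDerivAt (fun x => F x v) (P1 F (u, v)) u := by
  have h1 : HasFDerivAt (fun q : ℝ × ℝ => F q.1 q.2)
      (fderiv ℝ (fun q : ℝ × ℝ => F q.1 q.2) (u, v)) (u, v) :=
    (hF.differentiable (by norm_num)).differentiableAt.hasFDerivAt
  have h2 : HasDerivAt (fun x : ℝ => (x, v)) ((1 : ℝ), (0 : ℝ)) u := by
    simpa using (HasDerivAt.prodMk (hasDerivAt_id u) (hasDerivAt_const u v))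
  simpa [P1, Function.comp_def] using h1.comp_hasDerivAt u h2

theorem contDiff_P1 : ContDiff ℝ 1 (P1 F) := by
  have h := hF.fderiv_right (m := 1) (by norm_num)
  exact h.clm_apply contDiff_const

theorem continuous_P12 : Continuous (P12 F) := by
  have h := (contDiff_P1 hF).fderiv_right (m := 0) (by norm_num)
  exact (h.clm_apply contDiff_const).continuous

theorem hasDerivAt_P12 (u v : ℝ) : HasDerivAt (fun y => P1 F (u, y)) (P12 F (u, v)) v := by
  have h1 : HasFDerivAt (P1 F) (fderiv ℝ (P1 F) (u, v)) (u, v) :=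
    ((contDiff_P1 hF).differentiable (by norm_num)).differentiableAt.hasFDerivAt
  have h2 : HasDerivAt (fun y : ℝ => (u, y)) ((0 : ℝ), (1 : ℝ)) v := by
    simpa using (HasDerivAt.prodMk (hasDerivAt_const v u) (hasDerivAt_id v))
  simpa [P12, Function.comp_def] using h1.comp_hasDerivAt v h2

theorem mixedPartial_eq (z : ℝ) : mixedPartial F z = P12 F (z, z) := by
  have h : (fun y : ℝ => deriv (fun x : ℝ => F x y) z) = fun y => P1 F (z, y) := by
    funext y; exact (hasDerivAt_P1 hF z y).deriv
  rw [mixedPartial, h]; exact (hasDerivAt_P12 hF z z).deriv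

/-- Chord-squared identity. -/
theorem chord_sq (s t : ℝ) :
    F t t - F s t - F t s + F s s = ∫ u in s..t, ∫ v in s..t, P12 F (u, v) := by
  have hc1 : Continuous (P1 F) := (contDiff_P1 hF).continuous
  have step2 : ∀ u, P1 F (u, t) - P1 F (u, s) = ∫ v in s..t, P12 F (u, v) := by
    intro u
    rw [intervalIntegral.integral_eq_sub_of_hasDerivAt
      (fun v _ => hasDerivAt_P12 hF u v)
      (((continuous_P12 hF).comp (by continuity)).intervalIntegrable s t)]
  have step1 : F t t - F t s - (F s t - F s s)
      = ∫ u in s..t, (P1 F (u, t) - P1 F (u, s)) := by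
    rw [intervalIntegral.integral_eq_sub_of_hasDerivAt
      (f := fun u => F u t - F u s)
      (fun u _ => (hasDerivAt_P1 hF u t).sub (hasDerivAt_P1 hF u s))
      (((hc1.comp (by continuity)).sub (hc1.comp (by continuity))).intervalIntegrable s t)]
  have heq : F t t - F s t - F t s + F s s = F t t - F t s - (F s t - F s s) := by ring
  rw [heq, step1]
  exact intervalIntegral.integral_congr (fun u _ => step2 u)

omit hF

theorem interval_cauchy_schwarz {h : ℝ → ℝ} (hc : Continuous h) {s t : ℝ} (hst : s ≤ t) :
    (∫ x in s..t, h x) ^ 2 ≤ (t - s) * ∫ x in s..t, (h x) ^ 2 := by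
  rcases eq_or_lt_of_le hst with rfl | hlt
  · simp
  have hΔ : 0 < t - s := by linarith
  set I : ℝ := ∫ x in s..t, h x with hI
  set c : ℝ := I / (t - s) with hcdef
  have hint : IntervalIntegrable h MeasureTheory.volume s t := hc.intervalIntegrable s t
  have hnn : 0 ≤ ∫ x in s..t, (h x - c) ^ 2 :=
    intervalIntegral.integral_nonneg hst (fun x _ => sq_nonneg _)
  have hexp : (∫ x in s..t, (h x - c) ^ 2)
      = (∫ x in s..t, (h x) ^ 2) - 2 * c * I + c ^ 2 * (t - s) := by
    have e1 : ∀ x, (h x - c) ^ 2 = (h x) ^ 2 - 2 * c * h x + c ^ 2 := by intro x; ring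
    simp_rw [e1]
    have i2 : IntervalIntegrable (fun x => (h x) ^ 2) MeasureTheory.volume s t :=
      (hc.pow 2).intervalIntegrable s t
    have i3 : IntervalIntegrable (fun x => 2 * c * h x) MeasureTheory.volume s t :=
      hint.const_mul _
    rw [intervalIntegral.integral_add (i2.sub i3) (intervalIntegrable_const),
      intervalIntegral.integral_sub i2 i3, intervalIntegral.integral_const_mul,
      intervalIntegral.integral_const]
    have hne : t - s ≠ 0 := ne_of_gt hΔ
    rw [smul_eq_mul, hcdef]
    field_simp
    ring_nf
    rw [← hI]; ring
  have key : 0 ≤ (∫ x in s..t, (h x) ^ 2) - I ^ 2 / (t - s) := by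
    have h5 : (∫ x in s..t, (h x) ^ 2) - 2 * c * I + c ^ 2 * (t - s)
        = (∫ x in s..t, (h x) ^ 2) - I ^ 2 / (t - s) := by
      rw [hcdef]; field_simp; ring
    linarith [hexp ▸ hnn, h5 ▸ (hexp ▸ hnn)]
  have h6 := (div_le_iff₀ hΔ).mp (by linarith : I ^ 2 / (t - s) ≤ ∫ x in s..t, (h x) ^ 2)
  linarith

/-- Key double-integral lower bound. -/
theorem double_integral_lower {G : ℝ × ℝ → ℝ} (hG : Continuous G)
    {c₁ c₂ s t ε : ℝ} (hs : s ∈ Icc c₁ c₂) (ht : t ∈ Icc c₁ c₂) (hst : s ≤ t)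
    (hnear : ∀ u ∈ Icc c₁ c₂, ∀ v ∈ Icc c₁ c₂, |u - v| ≤ t - s → G (u, v) ≥ G (v, v) - ε) :
    (t - s) * (∫ ξ in s..t, G (ξ, ξ)) - ε * (t - s) ^ 2
      ≤ ∫ u in s..t, ∫ v in s..t, G (u, v) := by
  have hsub : Icc s t ⊆ Icc c₁ c₂ := Icc_subset_Icc hs.1 ht.2
  have hginner : ∀ u ∈ Icc s t,
      (∫ ξ in s..t, G (ξ, ξ)) - ε * (t - s) ≤ ∫ v in s..t, G (u, v) := by
    intro u hu
    have h1 : ∫ v in s..t, (G (v, v) - ε) ≤ ∫ v in s..t, G (u, v) := by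
      apply intervalIntegral.integral_mono_on hst
      · exact ((hG.comp (continuous_id.prodMk continuous_id)).sub
          continuous_const).intervalIntegrable s t
      · exact (hG.comp (continuous_const.prodMk continuous_id)).intervalIntegrable s t
      · intro v hv
        have h2 := hnear u (hsub hu) v (hsub hv) (by
          rw [abs_le]
          exact ⟨by linarith [hu.1, hv.2], by linarith [hu.2, hv.1]⟩)
        linarith [h2]
    have hdiag : Continuous fun v : ℝ => G (v, v) :=
      hG.comp (continuous_id.prodMk continuous_id)
    have h2 : (∫ v in s..t, (G (v, v) - ε)) = (∫ v in s..t, G (v, v)) - ε * (t - s) := by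
      rw [intervalIntegral.integral_sub (hdiag.intervalIntegrable s t) intervalIntegrable_const,
        intervalIntegral.integral_const, smul_eq_mul]
      ring
    linarith [h1, h2]
  have houter : ∫ u in s..t, ((∫ ξ in s..t, G (ξ, ξ)) - ε * (t - s))
      ≤ ∫ u in s..t, ∫ v in s..t, G (u, v) := by
    apply intervalIntegral.integral_mono_on hst intervalIntegrable_const
    · exact ((intervalIntegral.continuous_parametric_intervalIntegral_of_continuous'
        (f := fun u v => G (u, v)) (by exact hG.comp (continuous_fst.prodMk continuous_snd) :
          Continuous (Function.uncurry fun u v => G (u, v))) s t)).intervalIntegrable s t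
    · exact hginner
  rw [intervalIntegral.integral_const, smul_eq_mul] at houter
  nlinarith [houter]

include hF

theorem seg_upper
    {c₁ c₂ s t ε : ℝ} (hs : s ∈ Icc c₁ c₂) (ht : t ∈ Icc c₁ c₂) (hst : s ≤ t)
    (hpos : ∀ z ∈ Icc c₁ c₂, 0 ≤ P12 F (z, z))
    (hnear : ∀ u ∈ Icc c₁ c₂, ∀ v ∈ Icc c₁ c₂, |u - v| ≤ t - s →
      P12 F (u, v) ≥ P12 F (v, v) - ε) :
    (∫ ξ in s..t, Real.sqrt (P12 F (ξ, ξ))) ^ 2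
      ≤ (F t t - F s t - F t s + F s s) + ε * (t - s) ^ 2 := by
  have hGc : Continuous (P12 F) := continuous_P12 hF
  have hdiagc : Continuous fun ξ : ℝ => P12 F (ξ, ξ) :=
    hGc.comp (continuous_id.prodMk continuous_id)
  have h1 : (∫ ξ in s..t, Real.sqrt (P12 F (ξ, ξ))) ^ 2
      ≤ (t - s) * ∫ ξ in s..t, (Real.sqrt (P12 F (ξ, ξ))) ^ 2 :=
    interval_cauchy_schwarz (Real.continuous_sqrt.comp hdiagc) hst
  have h2 : (∫ ξ in s..t, (Real.sqrt (P12 F (ξ, ξ))) ^ 2) = ∫ ξ in s..t, P12 F (ξ, ξ) := by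
    apply intervalIntegral.integral_congr
    intro ξ hξ
    rw [uIcc_of_le hst] at hξ
    exact Real.sq_sqrt (hpos ξ (Icc_subset_Icc hs.1 ht.2 hξ))
  have h3 := double_integral_lower hGc hs ht hst hnear
  rw [chord_sq hF s t]
  rw [h2] at h1
  linarith

theorem seg_lower
    {c₁ c₂ s t m : ℝ} (hs : s ∈ Icc c₁ c₂) (ht : t ∈ Icc c₁ c₂) (hst : s ≤ t)
    (hm : ∀ z ∈ Icc c₁ c₂, m ≤ P12 F (z, z))
    (hnear : ∀ u ∈ Icc c₁ c₂, ∀ v ∈ Icc c₁ c₂, |u - v| ≤ t - s →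
      P12 F (u, v) ≥ P12 F (v, v) - m / 2) :
    m / 2 * (t - s) ^ 2 ≤ F t t - F s t - F t s + F s s := by
  have hGc : Continuous (P12 F) := continuous_P12 hF
  have hdiagc : Continuous fun ξ : ℝ => P12 F (ξ, ξ) :=
    hGc.comp (continuous_id.prodMk continuous_id)
  have h3 := double_integral_lower hGc hs ht hst hnear
  have h4 : m * (t - s) ≤ ∫ ξ in s..t, P12 F (ξ, ξ) := by
    have h5 : (∫ _ξ in s..t, m) ≤ ∫ ξ in s..t, P12 F (ξ, ξ) := by
      apply intervalIntegral.integral_mono_on hst intervalIntegrable_const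
        (hdiagc.intervalIntegrable s t)
      intro ξ hξ
      exact hm ξ (Icc_subset_Icc hs.1 ht.2 hξ)
    simpa [smul_eq_mul, mul_comm] using h5
  rw [chord_sq hF s t]
  nlinarith [sub_nonneg.mpr hst]

/-- Per-coordinate bounds with unordered endpoints. -/
theorem coord_bounds
    {c₁ c₂ p q m ε : ℝ} (hp : p ∈ Icc c₁ c₂) (hq : q ∈ Icc c₁ c₂)
    (hm : ∀ z ∈ Icc c₁ c₂, m ≤ P12 F (z, z)) (hm0 : 0 < m) (hεm : ε ≤ m / 2)
    (hnear : ∀ u ∈ Icc c₁ c₂, ∀ v ∈ Icc c₁ c₂, |u - v| ≤ |q - p| →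
      P12 F (u, v) ≥ P12 F (v, v) - ε) :
    (∫ ξ in p..q, Real.sqrt (P12 F (ξ, ξ))) ^ 2
        ≤ (F q q - F p q - F q p + F p p) + ε * (q - p) ^ 2
      ∧ m / 2 * (q - p) ^ 2 ≤ F q q - F p q - F q p + F p p := by
  have hpos : ∀ z ∈ Icc c₁ c₂, 0 ≤ P12 F (z, z) := fun z hz => (hm0.trans_le (hm z hz)).le
  rcases le_total p q with hpq | hqp
  · have habs : |q - p| = q - p := abs_of_nonneg (by linarith)
    have hnear' : ∀ u ∈ Icc c₁ c₂, ∀ v ∈ Icc c₁ c₂, |u - v| ≤ q - p →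
        P12 F (u, v) ≥ P12 F (v, v) - ε := by
      intro u hu v hv huv; exact hnear u hu v hv (by rw [habs]; exact huv)
    have hnear'' : ∀ u ∈ Icc c₁ c₂, ∀ v ∈ Icc c₁ c₂, |u - v| ≤ q - p →
        P12 F (u, v) ≥ P12 F (v, v) - m / 2 := by
      intro u hu v hv huv; linarith [hnear' u hu v hv huv]
    exact ⟨seg_upper hF hp hq hpq hpos hnear', seg_lower hF hp hq hpq hm hnear''⟩
  · have habs : |q - p| = p - q := by rw [abs_sub_comm]; exact abs_of_nonneg (by linarith)
    have hnear' : ∀ u ∈ Icc c₁ c₂, ∀ v ∈ Icc c₁ c₂, |u - v| ≤ p - q →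
        P12 F (u, v) ≥ P12 F (v, v) - ε := by
      intro u hu v hv huv; exact hnear u hu v hv (by rw [habs]; exact huv)
    have hnear'' : ∀ u ∈ Icc c₁ c₂, ∀ v ∈ Icc c₁ c₂, |u - v| ≤ p - q →
        P12 F (u, v) ≥ P12 F (v, v) - m / 2 := by
      intro u hu v hv huv; linarith [hnear' u hu v hv huv]
    have h1 := seg_upper hF hq hp hqp hpos hnear'
    have h2 := seg_lower hF hq hp hqp hm hnear''
    rw [intervalIntegral.integral_symm]
    constructor
    · rw [neg_pow]
      calc (-1 : ℝ) ^ 2 * (∫ ξ in q..p, Real.sqrt (P12 F (ξ, ξ))) ^ 2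
          = (∫ ξ in q..p, Real.sqrt (P12 F (ξ, ξ))) ^ 2 := by ring
        _ ≤ (F p p - F q p - F p q + F q q) + ε * (p - q) ^ 2 := h1
        _ = (F q q - F p q - F q p + F p p) + ε * (q - p) ^ 2 := by ring
    · calc m / 2 * (q - p) ^ 2 = m / 2 * (p - q) ^ 2 := by ring
        _ ≤ F p p - F q p - F p q + F q q := h2
        _ = F q q - F p q - F q p + F p p := by ring

omit hF

/-- Coordinates are dominated by the Euclidean norm. -/
theorem coord_le_norm {d : ℕ} (y : EuclideanSpace ℝ (Fin d)) (i : Fin d) : |y i| ≤ ‖y‖ := by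
  rw [EuclideanSpace.norm_eq, ← Real.sqrt_sq_eq_abs]
  apply Real.sqrt_le_sqrt
  exact (Finset.single_le_sum (f := fun j => ‖y j‖ ^ 2) (fun j _ => sq_nonneg _)
    (Finset.mem_univ i)).trans_eq' (by rw [Real.norm_eq_abs, sq_abs])

/-- The main per-segment bound in dimension d. -/
theorem segment_bound {d : ℕ} (α : Fin d → ℝ) (fi : Fin d → ℝ → ℝ → ℝ)
    (cl cu : Fin d → ℝ)
    (hfiC2 : ∀ i, ContDiff ℝ 2 (fun p : ℝ × ℝ => fi i p.1 p.2))
    {m ε αmax αmin : ℝ} (hm0 : 0 < m) (hε : 0 < ε) (hεm : ε ≤ m / 2)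
    (hαmin0 : 0 < αmin) (hαmin : ∀ i, αmin ≤ α i) (hαmax : ∀ i, α i ≤ αmax)
    (hαmax0 : 0 < αmax)
    (hmg : ∀ i, ∀ z ∈ Icc (cl i) (cu i), m ≤ P12 (fi i) (z, z))
    {w w' : EuclideanSpace ℝ (Fin d)}
    (hw : ∀ i, w i ∈ Icc (cl i) (cu i)) (hw' : ∀ i, w' i ∈ Icc (cl i) (cu i))
    (hnear : ∀ i, ∀ u ∈ Icc (cl i) (cu i), ∀ v ∈ Icc (cl i) (cu i),
      |u - v| ≤ |w' i - w i| → P12 (fi i) (u, v) ≥ P12 (fi i) (v, v) - ε)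
    {C : ℝ}
    (hC : C = ∑ i, α i * (fi i (w' i) (w' i) - fi i (w i) (w' i) - fi i (w' i) (w i)
      + fi i (w i) (w i))) :
    ‖psiMap α fi cl w' - psiMap α fi cl w‖
      ≤ Real.sqrt (1 + ε * αmax * 2 / (αmin * m)) * Real.sqrt C := by
  have key := fun i => coord_bounds (hfiC2 i) (hw i) (hw' i) (hmg i) hm0 hεm (hnear i)
  have hψ : ∀ i, (psiMap α fi cl w' - psiMap α fi cl w) i
      = Real.sqrt (α i) * ∫ ξ in (w i)..(w' i), Real.sqrt (P12 (fi i) (ξ, ξ)) := by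
    intro i
    have heq : ∀ (r : ℝ), (∫ ξ in (cl i)..r, Real.sqrt (mixedPartial (fi i) ξ)) =
        ∫ ξ in (cl i)..r, Real.sqrt (P12 (fi i) (ξ, ξ)) := by
      intro r
      apply intervalIntegral.integral_congr
      intro ξ _
      simp only [mixedPartial_eq (hfiC2 i)]
    have hsub : (psiMap α fi cl w' - psiMap α fi cl w) i
        = psiMap α fi cl w' i - psiMap α fi cl w i := rfl
    rw [hsub]
    show Real.sqrt (α i) * (∫ ξ in (cl i)..(w' i), Real.sqrt (mixedPartial (fi i) ξ))
        - Real.sqrt (α i) * (∫ ξ in (cl i)..(w i), Real.sqrt (mixedPartial (fi i) ξ))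
        = _
    have hsq : Continuous fun ξ : ℝ => Real.sqrt (P12 (fi i) (ξ, ξ)) := by
      exact Real.continuous_sqrt.comp ((continuous_P12 (hfiC2 i)).comp
        (continuous_id.prodMk continuous_id))
    rw [heq, heq, ← mul_sub,
      intervalIntegral.integral_interval_sub_left (hsq.intervalIntegrable _ _)
        (hsq.intervalIntegrable _ _)]
  set ψd := psiMap α fi cl w' - psiMap α fi cl w with hψd
  set Dex : Fin d → ℝ := fun i => fi i (w' i) (w' i) - fi i (w i) (w' i)
    - fi i (w' i) (w i) + fi i (w i) (w i) with hDex
  have hnorm2 : ‖ψd‖ ^ 2 = ∑ i, (ψd i) ^ 2 := by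
    rw [EuclideanSpace.norm_eq, Real.sq_sqrt (Finset.sum_nonneg fun i _ => sq_nonneg _)]
    simp [Real.norm_eq_abs, sq_abs]
  have hterm : ∀ i, (ψd i) ^ 2 ≤ α i * (Dex i + ε * (w' i - w i) ^ 2) := by
    intro i
    rw [hψ i, mul_pow, Real.sq_sqrt (hαmin0.trans_le (hαmin i)).le]
    exact mul_le_mul_of_nonneg_left (key i).1 (hαmin0.trans_le (hαmin i)).le
  have hsum : ‖ψd‖ ^ 2 ≤ C + ε * ∑ i, α i * (w' i - w i) ^ 2 := by
    rw [hnorm2, hC]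
    calc ∑ i, (ψd i) ^ 2 ≤ ∑ i, α i * (Dex i + ε * (w' i - w i) ^ 2) :=
          Finset.sum_le_sum (fun i _ => hterm i)
      _ = (∑ i, α i * Dex i) + ε * ∑ i, α i * (w' i - w i) ^ 2 := by
          rw [Finset.mul_sum, ← Finset.sum_add_distrib]
          congr 1; funext i; ring
  have hQ : αmin * (m / 2) * (∑ i, (w' i - w i) ^ 2) ≤ C := by
    rw [hC, Finset.mul_sum]
    apply Finset.sum_le_sum
    intro i _
    have h2 := (key i).2
    have hαi := hαmin i
    nlinarith [mul_le_mul hαi h2 (by positivity) ((hαmin0.trans_le hαi).le)]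
  have hC0 : (0 : ℝ) ≤ C := by
    refine le_trans ?_ hQ
    positivity
  have hs2 : ε * (∑ i, α i * (w' i - w i) ^ 2) ≤ ε * (αmax * ∑ i, (w' i - w i) ^ 2) := by
    apply mul_le_mul_of_nonneg_left _ hε.le
    rw [Finset.mul_sum]
    exact Finset.sum_le_sum fun i _ =>
      mul_le_mul_of_nonneg_right (hαmax i) (sq_nonneg _)
  have hsum3 : (∑ i, (w' i - w i) ^ 2) ≤ C * (2 / (αmin * m)) := by
    rw [show C * (2 / (αmin * m)) = 2 * C / (αmin * m) by ring,
      le_div_iff₀ (by positivity : (0:ℝ) < αmin * m)]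
    nlinarith [hQ]
  have hfin : ‖ψd‖ ^ 2 ≤ (1 + ε * αmax * 2 / (αmin * m)) * C := by
    have h7 : ε * (αmax * (C * (2 / (αmin * m)))) = ε * αmax * 2 / (αmin * m) * C := by
      field_simp
    nlinarith [hsum, hs2,
      mul_le_mul_of_nonneg_left hsum3 (by positivity : (0:ℝ) ≤ ε * αmax)]
  calc ‖ψd‖ = Real.sqrt (‖ψd‖ ^ 2) := (Real.sqrt_sq (norm_nonneg _)).symm
    _ ≤ Real.sqrt ((1 + ε * αmax * 2 / (αmin * m)) * C) := Real.sqrt_le_sqrt hfin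
    _ = Real.sqrt (1 + ε * αmax * 2 / (αmin * m)) * Real.sqrt C :=
        Real.sqrt_mul (by positivity) C

/-- Uniform continuity of the inverse of an injective continuous map on a compact set. -/
theorem inv_unif_cont {X Y : Type*} [MetricSpace X] [MetricSpace Y]
    {K : Set X} (hK : IsCompact K) {f : X → Y}
    (hf : ContinuousOn f K) (hinj : InjOn f K) :
    ∀ ε > 0, ∃ η > 0, ∀ w ∈ K, ∀ w' ∈ K, dist (f w) (f w') < η → dist w w' < ε := by
  haveI : CompactSpace K := isCompact_iff_compactSpace.mp hK
  set e : K ≃ (f '' K) := Equiv.Set.imageOfInjOn f K hinj with he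
  have hcont : Continuous e := by
    apply Continuous.subtype_mk
    exact hf.restrict
  set h : K ≃ₜ (f '' K) := hcont.homeoOfEquivCompactToT2 with hh
  haveI : CompactSpace (f '' K) := isCompact_iff_compactSpace.mp (hK.image_of_continuousOn hf)
  have huc : UniformContinuous (h.symm : (f '' K) → K) :=
    CompactSpace.uniformContinuous_of_continuous h.symm.continuous
  intro ε hε
  rcases Metric.uniformContinuous_iff.mp huc ε hε with ⟨η, hη, H⟩
  refine ⟨η, hη, fun w hw w' hw' hd => ?_⟩
  have key := H (a := h ⟨w, hw⟩) (b := h ⟨w', hw'⟩) (by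
    have hde : dist (h ⟨w, hw⟩) (h ⟨w', hw'⟩) = dist (f w) (f w') := by
      simp [hh, he, Subtype.dist_eq, Continuous.homeoOfEquivCompactToT2,
        Equiv.Set.imageOfInjOn]
    rw [hde]; exact hd)
  rw [h.symm_apply_apply, h.symm_apply_apply, Subtype.dist_eq] at key
  exact key

/-- The chord-length formula for the feature map. -/
theorem norm_sq_phi {d : ℕ} {Z : Set (EuclideanSpace ℝ (Fin d))} {α : Fin d → ℝ}
    {fi : Fin d → ℝ → ℝ → ℝ} {φ : EuclideanSpace ℝ (Fin d) → l2}
    (hφ : ∀ x ∈ Z, ∀ y ∈ Z, (inner ℝ (φ x) (φ y) : ℝ) = ∑ i, α i * fi i (x i) (y i))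
    {w w' : EuclideanSpace ℝ (Fin d)} (hw : w ∈ Z) (hw' : w' ∈ Z) :
    ‖φ w' - φ w‖ ^ 2 = ∑ i, α i * (fi i (w' i) (w' i) - fi i (w i) (w' i)
      - fi i (w' i) (w i) + fi i (w i) (w i)) := by
  have h1 : ‖φ w' - φ w‖ ^ 2 = (inner ℝ (φ w') (φ w') : ℝ) - inner ℝ (φ w') (φ w)
      - inner ℝ (φ w) (φ w') + inner ℝ (φ w) (φ w) := by
    rw [← real_inner_self_eq_norm_sq]
    rw [inner_sub_sub_self]
  rw [h1, hφ w' hw' w' hw', hφ w' hw' w hw, hφ w hw w' hw', hφ w hw w hw,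
    ← Finset.sum_sub_distrib, ← Finset.sum_sub_distrib, ← Finset.sum_add_distrib]
  congr 1; funext i; ring

/-- Continuity of the feature map. -/
theorem phi_continuousOn {d : ℕ} {Z : Set (EuclideanSpace ℝ (Fin d))} {α : Fin d → ℝ}
    {fi : Fin d → ℝ → ℝ → ℝ}
    (hficont : ∀ i, Continuous (fun p : ℝ × ℝ => fi i p.1 p.2))
    {φ : EuclideanSpace ℝ (Fin d) → l2}
    (hφ : ∀ x ∈ Z, ∀ y ∈ Z, (inner ℝ (φ x) (φ y) : ℝ) = ∑ i, α i * fi i (x i) (y i)) :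
    ContinuousOn φ Z := by
  intro x₀ hx₀
  have hq : ∀ x ∈ Z, ‖φ x - φ x₀‖ ^ 2
      = ∑ i, α i * (fi i (x i) (x i) - fi i (x₀ i) (x i) - fi i (x i) (x₀ i)
        + fi i (x₀ i) (x₀ i)) := by
    intro x hx
    rw [norm_sq_phi hφ hx₀ hx]
  set q : EuclideanSpace ℝ (Fin d) → ℝ := fun x =>
    ∑ i, α i * (fi i (x i) (x i) - fi i (x₀ i) (x i) - fi i (x i) (x₀ i)
        + fi i (x₀ i) (x₀ i)) with hqdef
  have hqcont : Continuous q := by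
    apply continuous_finset_sum
    intro i _
    have hxi : Continuous (fun x : EuclideanSpace ℝ (Fin d) => x i) :=
      (continuous_apply i).comp (PiLp.continuous_ofLp 2 _)
    have h1 : Continuous fun x : EuclideanSpace ℝ (Fin d) => fi i (x i) (x i) :=
      (hficont i).comp (hxi.prodMk hxi)
    have h2 : Continuous fun x : EuclideanSpace ℝ (Fin d) => fi i (x₀ i) (x i) :=
      (hficont i).comp (continuous_const.prodMk hxi)
    have h3 : Continuous fun x : EuclideanSpace ℝ (Fin d) => fi i (x i) (x₀ i) :=
      (hficont i).comp (hxi.prodMk continuous_const)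
    exact continuous_const.mul (((h1.sub h2).sub h3).add continuous_const)
  have hq0 : q x₀ = 0 := by rw [hqdef]; simp
  rw [ContinuousWithinAt, tendsto_iff_dist_tendsto_zero]
  have hev : ∀ x ∈ Z, dist (φ x) (φ x₀) = Real.sqrt (q x) := by
    intro x hx
    rw [dist_eq_norm, ← Real.sqrt_sq (norm_nonneg (φ x - φ x₀)), hq x hx]
  have htend : Filter.Tendsto (fun x => Real.sqrt (q x)) (nhdsWithin x₀ Z) (nhds 0) := by
    have h4 : Filter.Tendsto q (nhdsWithin x₀ Z) (nhds 0) := by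
      rw [← hq0]
      exact (hqcont.continuousAt).continuousWithinAt
    simpa [Function.comp_def] using (Real.continuous_sqrt.continuousAt.tendsto.comp h4)
  refine htend.congr' ?_
  filter_upwards [self_mem_nhdsWithin] with x hx
  exact (hev x hx).symm

set_option maxHeartbeats 2000000 in
/-- Additive kernels `f(x,y) = ∑ᵢ αᵢ fᵢ(x^{(i)}, y^{(i)})` on a box `𝒵`:
any path `γ` in `ℳ` with end-points `a, b` satisfies `l(γ) ≥ ‖ψ(φ⁻¹(b)) − ψ(φ⁻¹(a))‖`. -/
theorem additive_kernel_length_lower_bound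
    {d : ℕ} (hd : 1 ≤ d)
    (cl cu : Fin d → ℝ) (hcl : ∀ i, cl i ≤ cu i)
    (Z : Set (EuclideanSpace ℝ (Fin d)))
    (hZdef : Z = {x | ∀ i, x i ∈ Icc (cl i) (cu i)})
    (α : Fin d → ℝ) (hα : ∀ i, 0 < α i)
    (fi : Fin d → ℝ → ℝ → ℝ)
    (hfiC2 : ∀ i, ContDiff ℝ 2 (fun p : ℝ × ℝ => fi i p.1 p.2))
    (hfipos : ∀ i, ∀ z ∈ Icc (cl i) (cu i), 0 < mixedPartial (fi i) z)
    (φ : EuclideanSpace ℝ (Fin d) → l2)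
    (hφ : ∀ x ∈ Z, ∀ y ∈ Z, (inner ℝ (φ x) (φ y) : ℝ) = ∑ i, α i * fi i (x i) (y i))
    -- Assumption 1
    (hA1 : ∀ x ∈ Z, ∀ y ∈ Z, x ≠ y →
      ∃ a ∈ Z, (∑ i, α i * fi i (x i) (a i)) ≠ ∑ i, α i * fi i (y i) (a i))
    -- φ⁻¹ : the inverse of φ on ℳ
    (φinv : l2 → EuclideanSpace ℝ (Fin d)) (hφinv : ∀ x ∈ Z, φinv (φ x) = x)
    (a b : l2) (ha : a ∈ φ '' Z) (hb : b ∈ φ '' Z)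
    (γ : ℝ → l2) (hγ : IsPathIn (φ '' Z) a b γ) :
    ENNReal.ofReal ‖psiMap α fi cl (φinv b) - psiMap α fi cl (φinv a)‖ ≤ pathLength γ := by
  classical
  obtain ⟨hγc, hγmem, hγ0, hγ1⟩ := hγ
  obtain ⟨xa, hxa, rfl⟩ := ha
  obtain ⟨xb, hxb, rfl⟩ := hb
  rw [hφinv _ hxa, hφinv _ hxb]
  by_cases htop : pathLength γ = ⊤
  · rw [htop]; exact le_top
  set L : ℝ := (pathLength γ).toReal with hLdef
  have hL0 : 0 ≤ L := ENNReal.toReal_nonneg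
  have hchiL : ∀ P : PathPartition, chiSum γ P ≤ L := by
    intro P
    have h1 : ENNReal.ofReal (chiSum γ P) ≤ pathLength γ :=
      le_iSup (fun P => ENNReal.ofReal (chiSum γ P)) P
    have h2 := ENNReal.toReal_mono htop h1
    have hcs : 0 ≤ chiSum γ P := Finset.sum_nonneg fun _ _ => norm_nonneg _
    rwa [ENNReal.toReal_ofReal hcs] at h2
  suffices h : ‖psiMap α fi cl xb - psiMap α fi cl xa‖ ≤ L by
    calc ENNReal.ofReal ‖psiMap α fi cl xb - psiMap α fi cl xa‖
        ≤ ENNReal.ofReal L := ENNReal.ofReal_le_ofReal h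
      _ = pathLength γ := ENNReal.ofReal_toReal htop
  haveI : Nonempty (Fin d) := ⟨⟨0, hd⟩⟩
  have hZmem : ∀ w ∈ Z, ∀ i, w i ∈ Icc (cl i) (cu i) := by
    intro w hw i; rw [hZdef] at hw; exact hw i
  have hmex : ∀ i : Fin d, ∃ mi : ℝ, 0 < mi ∧
      ∀ z ∈ Icc (cl i) (cu i), mi ≤ P12 (fi i) (z, z) := by
    intro i
    have hdc : Continuous fun z : ℝ => P12 (fi i) (z, z) :=
      (continuous_P12 (hfiC2 i)).comp (continuous_id.prodMk continuous_id)
    obtain ⟨z₀, hz₀, hmin⟩ :=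
      isCompact_Icc.exists_isMinOn (nonempty_Icc.mpr (hcl i)) hdc.continuousOn
    refine ⟨P12 (fi i) (z₀, z₀), ?_, fun z hz => hmin hz⟩
    rw [← mixedPartial_eq (hfiC2 i)]
    exact hfipos i z₀ hz₀
  choose mf hmf0 hmfle using hmex
  set m : ℝ := Finset.univ.inf' Finset.univ_nonempty mf with hmdef
  have hm0 : 0 < m := (Finset.lt_inf'_iff _).mpr fun i _ => hmf0 i
  have hmg : ∀ i, ∀ z ∈ Icc (cl i) (cu i), m ≤ P12 (fi i) (z, z) := fun i z hz =>
    le_trans (Finset.inf'_le _ (Finset.mem_univ i)) (hmfle i z hz)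
  set αmin : ℝ := Finset.univ.inf' Finset.univ_nonempty α with hαmindef
  set αmax : ℝ := Finset.univ.sup' Finset.univ_nonempty α with hαmaxdef
  have hαmin0 : 0 < αmin := (Finset.lt_inf'_iff _).mpr fun i _ => hα i
  have hαminle : ∀ i, αmin ≤ α i := fun i => Finset.inf'_le _ (Finset.mem_univ i)
  have hαmaxge : ∀ i, α i ≤ αmax := fun i => Finset.le_sup' _ (Finset.mem_univ i)
  have hαmax0 : 0 < αmax :=
    lt_of_lt_of_le (hα (Classical.arbitrary (Fin d))) (hαmaxge _)
  have hnear_ex : ∀ ε : ℝ, 0 < ε → ∃ δ : ℝ, 0 < δ ∧ ∀ i, ∀ u ∈ Icc (cl i) (cu i),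
      ∀ v ∈ Icc (cl i) (cu i), |u - v| ≤ δ →
        P12 (fi i) (u, v) ≥ P12 (fi i) (v, v) - ε := by
    intro ε hε
    have hex : ∀ i : Fin d, ∃ δ : ℝ, 0 < δ ∧ ∀ u ∈ Icc (cl i) (cu i),
        ∀ v ∈ Icc (cl i) (cu i), |u - v| ≤ δ →
          P12 (fi i) (u, v) ≥ P12 (fi i) (v, v) - ε := by
      intro i
      have hK : IsCompact ((Icc (cl i) (cu i)) ×ˢ (Icc (cl i) (cu i))) :=
        isCompact_Icc.prod isCompact_Icc
      have huc := hK.uniformContinuousOn_of_continuous (continuous_P12 (hfiC2 i)).continuousOn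
      rcases Metric.uniformContinuousOn_iff.mp huc ε hε with ⟨δ, hδ, H⟩
      refine ⟨δ / 2, by positivity, fun u hu v hv huv => ?_⟩
      have hdlt : dist ((u, v) : ℝ × ℝ) ((v, v) : ℝ × ℝ) < δ := by
        rw [Prod.dist_eq]
        simp only [Real.dist_eq, sub_self, abs_zero]
        calc max |u - v| 0 = |u - v| := max_eq_left (abs_nonneg _)
          _ < δ := by linarith
      have h3 := H (u, v) (Set.mk_mem_prod hu hv) (v, v) (Set.mk_mem_prod hv hv) hdlt
      rw [Real.dist_eq] at h3
      have h4 := abs_lt.mp h3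
      linarith [h4.1]
    choose δf hδf0 hδfH using hex
    exact ⟨Finset.univ.inf' Finset.univ_nonempty δf,
      (Finset.lt_inf'_iff _).mpr fun i _ => hδf0 i,
      fun i u hu v hv huv => hδfH i u hu v hv
        (le_trans huv (Finset.inf'_le _ (Finset.mem_univ i)))⟩
  have hinj : InjOn φ Z := by
    intro x hx y hy hxy
    by_contra hne
    obtain ⟨aa, haa, hne2⟩ := hA1 x hx y hy hne
    exact hne2 (by rw [← hφ x hx aa haa, ← hφ y hy aa haa, hxy])
  have hφcont : ContinuousOn φ Z := phi_continuousOn (fun i => (hfiC2 i).continuous) hφ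
  have hZc : IsCompact Z := by
    rw [hZdef]
    have hZeq : {x : EuclideanSpace ℝ (Fin d) | ∀ i, x i ∈ Icc (cl i) (cu i)}
        = WithLp.toLp 2 '' Set.pi univ (fun i => Icc (cl i) (cu i)) := by
      ext x; rw [mem_setOf_eq]; constructor
      · intro hx; exact ⟨x.ofLp, Set.mem_univ_pi.mpr hx, rfl⟩
      · rintro ⟨y, hy, rfl⟩; exact Set.mem_univ_pi.mp hy
    rw [hZeq]
    exact (isCompact_univ_pi fun i => isCompact_Icc).image (PiLp.continuous_toLp 2 _)
  have hback := inv_unif_cont hZc hφcont hinj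
  have hγuc := isCompact_Icc.uniformContinuousOn_of_continuous hγc
  have hxZ : ∀ t ∈ Icc (0:ℝ) 1, φinv (γ t) ∈ Z ∧ φ (φinv (γ t)) = γ t := by
    intro t ht
    obtain ⟨w, hw, hwe⟩ := hγmem t ht
    rw [← hwe, hφinv w hw]
    exact ⟨hw, rfl⟩
  have hx0 : φinv (γ 0) = xa := by rw [hγ0, hφinv _ hxa]
  have hx1 : φinv (γ 1) = xb := by rw [hγ1, hφinv _ hxb]
  refine le_of_forall_pos_le_add fun ε' hε' => ?_
  set c0 : ℝ := αmax * 2 / (αmin * m) with hc0def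
  have hc00 : 0 < c0 := by positivity
  set ε : ℝ := min (m / 2) (ε' / (c0 * L + 1)) with hεdef
  have hεpos : 0 < ε := lt_min (by positivity) (by positivity)
  have hεm : ε ≤ m / 2 := min_le_left _ _
  obtain ⟨δ, hδ0, hδH⟩ := hnear_ex ε hεpos
  obtain ⟨η₁, hη₁, hH1⟩ := hback δ hδ0
  obtain ⟨η₂, hη₂, hH2⟩ := Metric.uniformContinuousOn_iff.mp hγuc η₁ hη₁
  obtain ⟨n, hn⟩ := exists_nat_gt (1 / η₂)
  have hn0 : 0 < (n:ℝ) := lt_trans (by positivity) hn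
  have hn0' : 0 < n := by exact_mod_cast hn0
  have hndist : (1:ℝ) / n < η₂ := by
    rw [div_lt_iff₀ hn0]
    have h5 := (div_lt_iff₀ hη₂).mp hn
    linarith [h5, mul_comm (n:ℝ) η₂]
  set tk : ℕ → ℝ := fun k => (k : ℝ) / n with htkdef
  have Pfirst : tk 0 = 0 := by simp [htkdef]
  have Plast : tk n = 1 := by simp [htkdef, div_self (ne_of_gt hn0)]
  have htkIcc : ∀ k, k ≤ n → tk k ∈ Icc (0:ℝ) 1 := by
    intro k hk
    constructor
    · positivity
    · rw [htkdef, div_le_one hn0]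
      exact_mod_cast hk
  set P : PathPartition := ⟨n, fun k => tk (min k n), by simpa using Pfirst,
    by simpa using Plast, by
      intro k hk
      have h6 : min k n ≤ min (k+1) n := by omega
      have h6' : ((min k n : ℕ) : ℝ) ≤ ((min (k+1) n : ℕ) : ℝ) := by exact_mod_cast h6
      show ((min k n : ℕ) : ℝ) / n ≤ ((min (k+1) n : ℕ) : ℝ) / n
      gcongr⟩ with hPdef
  have hPt : ∀ k, k ≤ n → P.t k = tk k := by
    intro k hk
    show tk (min k n) = tk k
    rw [min_eq_left hk]
  set xk : ℕ → EuclideanSpace ℝ (Fin d) := fun k => φinv (γ (tk k)) with hxkdef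
  have hxkZ : ∀ k, k ≤ n → xk k ∈ Z := fun k hk => (hxZ _ (htkIcc k hk)).1
  have hxkφ : ∀ k, k ≤ n → φ (xk k) = γ (tk k) := fun k hk => (hxZ _ (htkIcc k hk)).2
  have hstep : ∀ k, k < n → dist (xk (k+1)) (xk k) < δ := by
    intro k hk
    have hk1 : k + 1 ≤ n := hk
    have hdt : dist (tk (k+1)) (tk k) < η₂ := by
      have hdiff : tk (k+1) - tk k = 1 / n := by
        show ((k+1 : ℕ) : ℝ) / n - (k : ℝ) / n = 1 / n
        push_cast
        field_simp
        ring
      rw [Real.dist_eq, hdiff, abs_of_pos (by positivity)]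
      exact hndist
    have h8 := hH2 (tk (k+1)) (htkIcc (k+1) hk1) (tk k) (htkIcc k hk.le) hdt
    have h9 : dist (φ (xk (k+1))) (φ (xk k)) < η₁ := by
      rw [hxkφ (k+1) hk1, hxkφ k hk.le]; exact h8
    exact hH1 (xk (k+1)) (hxkZ (k+1) hk1) (xk k) (hxkZ k hk.le) h9
  have hcoordδ : ∀ k, k < n → ∀ i, |xk (k+1) i - xk k i| ≤ δ := by
    intro k hk i
    have h10 : |(xk (k+1) - xk k) i| ≤ ‖xk (k+1) - xk k‖ := coord_le_norm _ i
    have h11 : (xk (k+1) - xk k) i = xk (k+1) i - xk k i := rfl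
    rw [h11, ← dist_eq_norm] at h10
    exact h10.trans (hstep k hk).le
  set q : ℝ := ε * αmax * 2 / (αmin * m) with hqdef
  have hq0 : 0 ≤ q := by positivity
  have hsegbound : ∀ k, k < n →
      ‖psiMap α fi cl (xk (k+1)) - psiMap α fi cl (xk k)‖
        ≤ Real.sqrt (1 + q) * ‖γ (tk (k+1)) - γ (tk k)‖ := by
    intro k hk
    have hk1 : k + 1 ≤ n := hk
    have hw := hxkZ k hk.le
    have hw' := hxkZ (k+1) hk1
    have hC : ‖γ (tk (k+1)) - γ (tk k)‖ ^ 2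
        = ∑ i, α i * (fi i (xk (k+1) i) (xk (k+1) i) - fi i (xk k i) (xk (k+1) i)
          - fi i (xk (k+1) i) (xk k i) + fi i (xk k i) (xk k i)) := by
      rw [← hxkφ (k+1) hk1, ← hxkφ k hk.le, norm_sq_phi hφ hw hw']
    have hnear : ∀ i, ∀ u ∈ Icc (cl i) (cu i), ∀ v ∈ Icc (cl i) (cu i),
        |u - v| ≤ |xk (k+1) i - xk k i| →
          P12 (fi i) (u, v) ≥ P12 (fi i) (v, v) - ε := by
      intro i u hu v hv huv
      exact hδH i u hu v hv (huv.trans (hcoordδ k hk i))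
    have hb := segment_bound α fi cl cu hfiC2 hm0 hεpos hεm hαmin0 hαminle hαmaxge
      hαmax0 hmg (hZmem _ hw) (hZmem _ hw') hnear hC
    rw [Real.sqrt_sq (norm_nonneg _)] at hb
    exact hb
  have htel : psiMap α fi cl xb - psiMap α fi cl xa
      = ∑ k ∈ Finset.range n, (psiMap α fi cl (xk (k+1)) - psiMap α fi cl (xk k)) := by
    rw [Finset.sum_range_sub (fun k => psiMap α fi cl (xk k))]
    have e1 : xk n = xb := by rw [hxkdef]; simp only; rw [Plast, hx1]
    have e0 : xk 0 = xa := by rw [hxkdef]; simp only; rw [Pfirst, hx0]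
    rw [e1, e0]
  have hchiP : chiSum γ P = ∑ k ∈ Finset.range n, ‖γ (tk (k+1)) - γ (tk k)‖ := by
    apply Finset.sum_congr rfl
    intro k hk
    have hk' := Finset.mem_range.mp hk
    rw [hPt k hk'.le, hPt (k+1) hk']
  have hfinal : ‖psiMap α fi cl xb - psiMap α fi cl xa‖ ≤ Real.sqrt (1 + q) * L := by
    calc ‖psiMap α fi cl xb - psiMap α fi cl xa‖
        = ‖∑ k ∈ Finset.range n, (psiMap α fi cl (xk (k+1)) - psiMap α fi cl (xk k))‖ := by
          rw [htel]
      _ ≤ ∑ k ∈ Finset.range n, ‖psiMap α fi cl (xk (k+1)) - psiMap α fi cl (xk k)‖ :=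
          norm_sum_le _ _
      _ ≤ ∑ k ∈ Finset.range n, Real.sqrt (1 + q) * ‖γ (tk (k+1)) - γ (tk k)‖ :=
          Finset.sum_le_sum fun k hk => hsegbound k (Finset.mem_range.mp hk)
      _ = Real.sqrt (1 + q) * chiSum γ P := by rw [hchiP, Finset.mul_sum]
      _ ≤ Real.sqrt (1 + q) * L :=
          mul_le_mul_of_nonneg_left (hchiL P) (Real.sqrt_nonneg _)
  have hsqrtle : Real.sqrt (1 + q) ≤ 1 + q := by
    calc Real.sqrt (1 + q) ≤ Real.sqrt ((1 + q) ^ 2) :=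
          Real.sqrt_le_sqrt (by nlinarith)
      _ = 1 + q := Real.sqrt_sq (by positivity)
  have hεle : ε ≤ ε' / (c0 * L + 1) := min_le_right _ _
  have hposc : (0:ℝ) < c0 * L + 1 := by positivity
  have hqC : q * L ≤ ε' := by
    have hql : q = ε * c0 := by rw [hqdef, hc0def]; ring
    have h2 : ε * (c0 * L) ≤ (ε' / (c0 * L + 1)) * (c0 * L) :=
      mul_le_mul_of_nonneg_right hεle (by positivity)
    have h3 : (ε' / (c0 * L + 1)) * (c0 * L + 1) = ε' :=
      div_mul_cancel₀ _ (ne_of_gt hposc)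
    have h4 : (ε' / (c0 * L + 1)) * (c0 * L) ≤ ε' := by
      nlinarith [div_nonneg hε'.le hposc.le]
    calc q * L = ε * (c0 * L) := by rw [hql]; ring
      _ ≤ ε' := h2.trans h4
  calc ‖psiMap α fi cl xb - psiMap α fi cl xa‖ ≤ Real.sqrt (1 + q) * L := hfinal
    _ ≤ (1 + q) * L := mul_le_mul_of_nonneg_right hsqrtle hL0
    _ = L + q * L := by ring
    _ ≤ L + ε' := by linarith [hqC]
end
end
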